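/- arXiv:2411.05304 — 9 statements merged into one kernel-verified Lean document; each statement's English description precedes it below -/
import Mathlib

section
/- Let G be a bipartite graph with m edges. Then the spectral radius of the adjacency matrix of G satisfies ρ(G) ≤ √m. -/
open Matrix SimpleGraph

open Classical in
/-- The adjacency matrix of a simple graph over `ℝ`. -/
noncomputable def adjMat {V : Type} [Fintype V] (G : SimpleGraph V) : Matrix V V ℝ :=
  fun u v => if G.Adj u v then (1 : ℝ) else 0

/-- `ρ` is the spectral radius (largest real eigenvalue) of the adjacency matrix of `G`. -/
def IsSpecRad {V : Type} [Fintype V] (G : SimpleGraph V) (ρ : ℝ) : Prop :=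
  (∃ x : V → ℝ, x ≠ 0 ∧ adjMat G *ᵥ x = ρ • x) ∧
  ∀ μ : ℝ, (∃ x : V → ℝ, x ≠ 0 ∧ adjMat G *ᵥ x = μ • x) → μ ≤ ρ

/-- `G` contains a copy of `F` as a (not necessarily induced) subgraph. -/
def ContainsSub {α β : Type} (F : SimpleGraph α) (G : SimpleGraph β) : Prop :=
  ∃ f : F →g G, Function.Injective f

/-!
The sign vector `s = ±1` of a proper 2-colouring anticommutes with the adjacency matrix `A`, so
`x ↦ s * x` turns a `ρ`-eigenvector into a `(-ρ)`-eigenvector. For `ρ ≠ 0` the two are orthogonal,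
and Bessel's inequality for each row of `A` gives `ρ² + (-ρ)² ≤ ∑ i, ∑ j, A i j ^ 2 = 2 m`.
-/

lemma adjMat_eq_adjMatrix {V : Type} [Fintype V] (G : SimpleGraph V) [DecidableRel G.Adj] :
    adjMat G = G.adjMatrix ℝ := by
  ext u v
  simp [adjMat, adjMatrix_apply]

namespace Matrix

variable {n : Type*} [Fintype n]

theorem IsSymm.dotProduct_eq_zero_of_mulVec_eq_smul {K : Type*} [Field K] {A : Matrix n n K}
    (hA : A.IsSymm) {μ ν : K} {x y : n → K} (hx : A *ᵥ x = μ • x) (hy : A *ᵥ y = ν • y)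
    (hμν : μ ≠ ν) : x ⬝ᵥ y = 0 := by
  have h : μ * (x ⬝ᵥ y) = ν * (x ⬝ᵥ y) := by
    rw [← smul_eq_mul, ← smul_dotProduct, ← hx, ← smul_eq_mul, ← dotProduct_smul, ← hy,
      dotProduct_mulVec, ← mulVec_transpose, hA.eq, dotProduct_comm]
  have h' : (μ - ν) * (x ⬝ᵥ y) = 0 := by linear_combination h
  exact (mul_eq_zero.mp h').resolve_left (sub_ne_zero.mpr hμν)

/-- Bessel's inequality for two orthogonal vectors; a zero `x` or `y` contributes `0 / 0 = 0`. -/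
theorem sq_dotProduct_div_add_sq_dotProduct_div_le {x y : n → ℝ} (hxy : x ⬝ᵥ y = 0)
    (z : n → ℝ) :
    (x ⬝ᵥ z) ^ 2 / (x ⬝ᵥ x) + (y ⬝ᵥ z) ^ 2 / (y ⬝ᵥ y) ≤ z ⬝ᵥ z := by
  have coeff_sq (u : n → ℝ) : (u ⬝ᵥ z / (u ⬝ᵥ u)) ^ 2 * (u ⬝ᵥ u) = (u ⬝ᵥ z) ^ 2 / (u ⬝ᵥ u) := by
    rcases eq_or_ne (u ⬝ᵥ u) 0 with h | h
    · simp [h]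
    · field_simp
  have residual_nonneg : 0 ≤ (z - (x ⬝ᵥ z / (x ⬝ᵥ x)) • x - (y ⬝ᵥ z / (y ⬝ᵥ y)) • y) ⬝ᵥ
      (z - (x ⬝ᵥ z / (x ⬝ᵥ x)) • x - (y ⬝ᵥ z / (y ⬝ᵥ y)) • y) :=
    Finset.sum_nonneg fun i _ => mul_self_nonneg _
  simp only [sub_dotProduct, dotProduct_sub, smul_dotProduct, dotProduct_smul, smul_eq_mul,
    hxy, dotProduct_comm y x, dotProduct_comm z] at residual_nonneg
  linear_combination residual_nonneg + coeff_sq x + coeff_sq y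

theorem sum_sq_dotProduct_row_div_of_mulVec_eq_smul {A : Matrix n n ℝ} {c : ℝ} {u : n → ℝ}
    (hu0 : u ≠ 0) (hu : A *ᵥ u = c • u) : ∑ i, (u ⬝ᵥ A i) ^ 2 / (u ⬝ᵥ u) = c ^ 2 := by
  have hrow (i : n) : u ⬝ᵥ A i = c * u i := by
    rw [dotProduct_comm]
    exact congrFun hu i
  have hnorm : ∑ i, u i ^ 2 = u ⬝ᵥ u := by simp only [dotProduct, sq]
  simp only [hrow, mul_pow, ← Finset.sum_div, ← Finset.mul_sum, hnorm]
  rw [mul_div_assoc, div_self (dotProduct_self_eq_zero.not.mpr hu0), mul_one]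

theorem sq_add_sq_le_sum_sq_of_mulVec_eq_smul {A : Matrix n n ℝ} {μ ν : ℝ} {x y : n → ℝ}
    (hx0 : x ≠ 0) (hy0 : y ≠ 0) (hxy : x ⬝ᵥ y = 0) (hx : A *ᵥ x = μ • x)
    (hy : A *ᵥ y = ν • y) : μ ^ 2 + ν ^ 2 ≤ ∑ i, ∑ j, A i j ^ 2 :=
  calc μ ^ 2 + ν ^ 2 = ∑ i, ((x ⬝ᵥ A i) ^ 2 / (x ⬝ᵥ x) + (y ⬝ᵥ A i) ^ 2 / (y ⬝ᵥ y)) := by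
        rw [Finset.sum_add_distrib, sum_sq_dotProduct_row_div_of_mulVec_eq_smul hx0 hx,
          sum_sq_dotProduct_row_div_of_mulVec_eq_smul hy0 hy]
    _ ≤ ∑ i, A i ⬝ᵥ A i :=
        Finset.sum_le_sum fun i _ => sq_dotProduct_div_add_sq_dotProduct_div_le hxy (A i)
    _ = ∑ i, ∑ j, A i j ^ 2 := by simp only [dotProduct, sq]

end Matrix

namespace SimpleGraph

variable {V : Type*} [Fintype V] (G : SimpleGraph V) [DecidableRel G.Adj]

theorem sum_sum_adjMatrix_apply_sq {α : Type*} [Semiring α] :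
    ∑ i, ∑ j, G.adjMatrix α i j ^ 2 = 2 * G.edgeFinset.card := by
  have hrow (i : V) : ∑ j, G.adjMatrix α i j ^ 2 = G.degree i := by
    rw [← adjMatrix_mul_self_apply_self, mul_apply]
    refine Finset.sum_congr rfl fun j _ => ?_
    rw [sq, G.isSymm_adjMatrix.apply i j]
  simp only [hrow]
  rw [← Nat.cast_sum, G.sum_degrees_eq_twice_card_edges, Nat.cast_mul, Nat.cast_ofNat]

variable {G}

theorem adjMatrix_mulVec_mul_of_adj {α : Type*} [CommRing α] {s : V → α}
    (hs : ∀ u v, G.Adj u v → s v = -s u) (x : V → α) :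
    G.adjMatrix α *ᵥ (s * x) = -(s * G.adjMatrix α *ᵥ x) := by
  ext u
  simp only [adjMatrix_mulVec_apply, Pi.mul_apply, Pi.neg_apply, Finset.mul_sum,
    ← Finset.sum_neg_distrib]
  refine Finset.sum_congr rfl fun v hv => ?_
  rw [hs u v ((mem_neighborFinset G u v).mp hv)]
  ring

theorem Colorable.exists_adjMatrix_mulVec_eq_neg_smul {α : Type*} [CommRing α]
    (hG : G.Colorable 2) {μ : α} {x : V → α} (hx0 : x ≠ 0) (hx : G.adjMatrix α *ᵥ x = μ • x) :
    ∃ y ≠ 0, G.adjMatrix α *ᵥ y = (-μ) • y := by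
  obtain ⟨c⟩ := hG
  let s : V → α := fun v => if c v = 0 then 1 else -1
  have hs : ∀ u v, G.Adj u v → s v = -s u := by
    intro u v huv
    have hne := c.valid huv
    simp only [s]
    generalize c u = a at hne
    generalize c v = b at hne
    fin_cases a <;> fin_cases b <;> simp_all
  have hs_mul_self : s * s = 1 := by
    ext v
    by_cases h : c v = 0 <;> simp [s, h]
  refine ⟨s * x, fun h => hx0 ?_, ?_⟩
  · rw [← one_mul x, ← hs_mul_self, mul_assoc, h, mul_zero]
  · rw [adjMatrix_mulVec_mul_of_adj hs, hx, mul_smul_comm, neg_smul]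

end SimpleGraph

/-- A bipartite graph with `m` edges has spectral radius at most `√m`. -/
theorem bipartite_specRad_le_sqrt {V : Type} [Fintype V] (G : SimpleGraph V)
    (m : ℕ) (hm : G.edgeSet.ncard = m) (hbip : G.Colorable 2)
    (ρ : ℝ) (hρ : IsSpecRad G ρ) :
    ρ ≤ Real.sqrt m := by
  classical
  obtain ⟨⟨x, hx0, hx⟩, -⟩ := hρ
  rw [adjMat_eq_adjMatrix] at hx
  obtain ⟨y, hy0, hy⟩ := hbip.exists_adjMatrix_mulVec_eq_neg_smul hx0 hx
  refine Real.le_sqrt_of_sq_le ?_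
  rcases eq_or_ne ρ 0 with rfl | hρ0
  · simp
  have hxy := G.isSymm_adjMatrix.dotProduct_eq_zero_of_mulVec_eq_smul hx hy
    (by contrapose! hρ0; linarith)
  have hfrob := sq_add_sq_le_sum_sq_of_mulVec_eq_smul hx0 hy0 hxy hx hy
  rw [G.sum_sum_adjMatrix_apply_sq, ← Set.ncard_coe_finset, coe_edgeFinset, hm, neg_sq] at hfrob
  linarith
end

section
/- For every bipartite graph G with m edges, ρ(G) = √m holds if and only if G is a disjoint union of a complete bipartite graph K_{a,b} with ab = m and isolated vertices. -/
/-!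
If `x` is an eigenvector of the adjacency matrix for `μ` and `|x|` is maximal at `u`, then
`μ² x u` is the sum of `x w` over the walks `u v w`. In a triangle-free graph the edges at distinct neighbours of `u` are distinct, so there
are at most `m` such walks and `μ² ≤ m`. When `μ = √m` and `x u > 0` both estimates are tight:
every edge meets `B = N(u)`, and `x` is maximal on `A = N(B)`. Running the same argument from any
vertex of `A` shows that `A` and `B` span a complete bipartite graph containing every edge.
Conversely `K_{a,b}` has the eigenvector `√b` on one side and `√a` on the other, for `√(ab)`.
-/

open Matrix SimpleGraph

open Finset

section

variable {V : Type} [Fintype V] {G : SimpleGraph V} [DecidableRel G.Adj] {x : V → ℝ} {μ : ℝ}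

lemma adjMat_eq_adjMatrix_s1 : adjMat G = G.adjMatrix ℝ := by
  ext u v
  simp only [adjMat, adjMatrix_apply]
  congr

lemma exists_abs_le_of_ne_zero (hx0 : x ≠ 0) : ∃ u, 0 < |x u| ∧ ∀ v, |x v| ≤ |x u| := by
  obtain ⟨w, hw⟩ := Function.ne_iff.1 hx0
  have : Nonempty V := ⟨w⟩
  obtain ⟨u, hu⟩ := Finite.exists_max fun v => |x v|
  exact ⟨u, (abs_pos.2 hw).trans_le (hu w), hu⟩

lemma exists_pos_abs_le_of_mulVec_eq {M : Matrix V V ℝ} (hx0 : x ≠ 0) (hx : M *ᵥ x = μ • x) :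
    ∃ y : V → ℝ, M *ᵥ y = μ • y ∧ ∃ u, 0 < y u ∧ ∀ v, |y v| ≤ y u := by
  obtain ⟨u, hu0, hu⟩ := exists_abs_le_of_ne_zero hx0
  rcases le_or_gt 0 (x u) with hpos | hneg
  · rw [abs_of_nonneg hpos] at hu0 hu
    exact ⟨x, hx, u, hu0, hu⟩
  · refine ⟨-x, by rw [mulVec_neg, hx, smul_neg], u, neg_pos.2 hneg, fun v => ?_⟩
    simpa [abs_of_neg hneg] using hu v

lemma sq_mul_eq_sum_sum (hx : G.adjMatrix ℝ *ᵥ x = μ • x) (u : V) :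
    μ ^ 2 * x u = ∑ v ∈ G.neighborFinset u, ∑ w ∈ G.neighborFinset v, x w := by
  have hx' (v : V) : ∑ w ∈ G.neighborFinset v, x w = μ * x v := by
    simpa using congrFun hx v
  simp only [hx', ← mul_sum, sq, mul_assoc]

lemma sq_mul_abs_le_sum_degree_mul (hx : G.adjMatrix ℝ *ᵥ x = μ • x) {u : V}
    (hu : ∀ v, |x v| ≤ |x u|) :
    μ ^ 2 * |x u| ≤ (∑ v ∈ G.neighborFinset u, G.degree v : ℕ) * |x u| :=
  calc μ ^ 2 * |x u| = |∑ v ∈ G.neighborFinset u, ∑ w ∈ G.neighborFinset v, x w| := by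
        rw [← sq_mul_eq_sum_sum hx, abs_mul, abs_of_nonneg (sq_nonneg μ)]
    _ ≤ ∑ v ∈ G.neighborFinset u, ∑ w ∈ G.neighborFinset v, |x w| :=
        (abs_sum_le_sum_abs _ _).trans (sum_le_sum fun v _ => abs_sum_le_sum_abs _ _)
    _ ≤ ∑ v ∈ G.neighborFinset u, ∑ w ∈ G.neighborFinset v, |x u| :=
        sum_le_sum fun v _ => sum_le_sum fun w _ => hu w
    _ = (∑ v ∈ G.neighborFinset u, G.degree v : ℕ) * |x u| := by
        simp [sum_mul]

variable [DecidableEq V]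

lemma pairwiseDisjoint_incidenceFinset_of_cliqueFree (hG : G.CliqueFree 3) (u : V) :
    (G.neighborFinset u : Set V).PairwiseDisjoint (fun v => G.incidenceFinset v) := by
  intro v hv w hw hvw
  rw [Function.onFun, ← disjoint_coe, coe_incidenceFinset, coe_incidenceFinset,
    Set.disjoint_iff_inter_eq_empty]
  simp only [coe_neighborFinset] at hv hw
  exact G.incidenceSet_inter_incidenceSet_of_not_adj
    (isIndepSet_neighborSet_of_triangleFree G hG u hv hw hvw) hvw

lemma sum_degree_neighborFinset_eq_card_biUnion (hG : G.CliqueFree 3) (u : V) :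
    ∑ v ∈ G.neighborFinset u, G.degree v =
      #((G.neighborFinset u).biUnion fun v => G.incidenceFinset v) := by
  simp only [card_biUnion (pairwiseDisjoint_incidenceFinset_of_cliqueFree hG u),
    card_incidenceFinset_eq_degree]

lemma sum_degree_neighborFinset_le_card_edgeFinset (hG : G.CliqueFree 3) (u : V) :
    ∑ v ∈ G.neighborFinset u, G.degree v ≤ #G.edgeFinset := by
  rw [sum_degree_neighborFinset_eq_card_biUnion hG]
  exact card_le_card (biUnion_subset.2 fun v _ => G.incidenceFinset_subset v)

lemma mem_neighborFinset_or_of_sum_degree_eq (hG : G.CliqueFree 3) {u : V}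
    (h : ∑ v ∈ G.neighborFinset u, G.degree v = #G.edgeFinset) {a b : V} (hab : G.Adj a b) :
    a ∈ G.neighborFinset u ∨ b ∈ G.neighborFinset u := by
  rw [sum_degree_neighborFinset_eq_card_biUnion hG] at h
  have hcover := eq_of_subset_of_card_le
    (biUnion_subset.2 fun v _ => G.incidenceFinset_subset v) h.ge
  have hab' : s(a, b) ∈ (G.neighborFinset u).biUnion fun v => G.incidenceFinset v := by
    rw [hcover, mem_edgeFinset]
    exact hab
  obtain ⟨v, hv, hvab⟩ := mem_biUnion.1 hab'
  rw [mem_incidenceFinset] at hvab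
  rcases Sym2.mem_iff.1 hvab.2 with rfl | rfl
  · exact .inl hv
  · exact .inr hv

theorem sq_le_card_edgeFinset_of_mulVec_eq (hG : G.CliqueFree 3) (hx0 : x ≠ 0)
    (hx : G.adjMatrix ℝ *ᵥ x = μ • x) : μ ^ 2 ≤ #G.edgeFinset := by
  obtain ⟨u, hu0, hu⟩ := exists_abs_le_of_ne_zero hx0
  refine le_of_mul_le_mul_right ((sq_mul_abs_le_sum_degree_mul hx hu).trans ?_) hu0
  gcongr
  exact_mod_cast sum_degree_neighborFinset_le_card_edgeFinset hG u

lemma sum_degree_neighborFinset_eq_and_eq_of_sq_eq (hG : G.CliqueFree 3)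
    (hx : G.adjMatrix ℝ *ᵥ x = μ • x)
    (hμ : μ ^ 2 = #G.edgeFinset) {u : V} (hu0 : 0 < x u) (hu : ∀ v, |x v| ≤ x u) :
    ∑ v ∈ G.neighborFinset u, G.degree v = #G.edgeFinset ∧
      ∀ v ∈ G.neighborFinset u, ∀ w ∈ G.neighborFinset v, x w = x u := by
  have hle (w : V) : x w ≤ x u := (le_abs_self _).trans (hu w)
  have hinner (v : V) : ∑ w ∈ G.neighborFinset v, x w ≤ ∑ w ∈ G.neighborFinset v, x u :=
    sum_le_sum fun w _ => hle w
  have hconst : ∑ v ∈ G.neighborFinset u, ∑ w ∈ G.neighborFinset v, x u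
      = (∑ v ∈ G.neighborFinset u, G.degree v : ℕ) * x u := by
    simp [sum_mul]
  have heq : ∑ v ∈ G.neighborFinset u, ∑ w ∈ G.neighborFinset v, x w
      = ∑ v ∈ G.neighborFinset u, ∑ w ∈ G.neighborFinset v, x u := by
    refine le_antisymm (sum_le_sum fun v _ => hinner v) ?_
    rw [hconst, ← sq_mul_eq_sum_sum hx, hμ]
    gcongr
    exact_mod_cast sum_degree_neighborFinset_le_card_edgeFinset hG u
  constructor
  · have hmul : (#G.edgeFinset : ℝ) * x u
        = (∑ v ∈ G.neighborFinset u, G.degree v : ℕ) * x u := by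
      rw [← hconst, ← heq, ← sq_mul_eq_sum_sum hx, hμ]
    exact_mod_cast (mul_right_cancel₀ hu0.ne' hmul).symm
  · intro v hv w hw
    have hv' := (sum_eq_sum_iff_of_le fun v _ => hinner v).1 heq v hv
    exact (sum_eq_sum_iff_of_le fun w _ => hle w).1 hv' w hw

theorem exists_completeBipartite_of_sq_eq (hG : G.CliqueFree 3)
    (hx : G.adjMatrix ℝ *ᵥ x = μ • x) (hμ : μ ^ 2 = #G.edgeFinset) {u : V} (hu0 : 0 < x u)
    (hu : ∀ v, |x v| ≤ x u) :
    ∃ A B : Finset V, Disjoint A B ∧ #A * #B = #G.edgeFinset ∧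
      ∀ a b, G.Adj a b ↔ (a ∈ A ∧ b ∈ B) ∨ (a ∈ B ∧ b ∈ A) := by
  set B := G.neighborFinset u
  set A := B.biUnion fun v => G.neighborFinset v
  have hval : ∀ a ∈ A, x a = x u := by
    intro a ha
    obtain ⟨v, hv, hav⟩ := mem_biUnion.1 ha
    exact (sum_degree_neighborFinset_eq_and_eq_of_sq_eq hG hx hμ hu0 hu).2 v hv a hav
  have hcover (w : V) (hw : x w = x u) {a b : V} (hab : G.Adj a b) :
      a ∈ G.neighborFinset w ∨ b ∈ G.neighborFinset w :=
    mem_neighborFinset_or_of_sum_degree_eq hG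
      (sum_degree_neighborFinset_eq_and_eq_of_sq_eq hG hx hμ (hw ▸ hu0) (hw ▸ hu)).1 hab
  have hdisj : Disjoint A B := by
    refine disjoint_left.2 fun a ha haB => ?_
    obtain ⟨v, hv, hav⟩ := mem_biUnion.1 ha
    rw [mem_neighborFinset] at hv hav haB
    exact isIndepSet_neighborSet_of_triangleFree G hG u hv haB hav.ne hav
  -- `a` maximises `x` too, so the edge `u b` meets `N(a)`, and `u ∉ N(a)` as `a ∉ B`.
  have hcomplete : ∀ a ∈ A, ∀ b ∈ B, G.Adj a b := by
    intro a ha b hb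
    rcases hcover a (hval a ha) ((mem_neighborFinset _ _ _).1 hb) with hua | hba
    · exact absurd ((mem_neighborFinset _ _ _).1 hua).symm
        (disjoint_left.1 hdisj ha ∘ (mem_neighborFinset _ _ _).2)
    · exact (mem_neighborFinset _ _ _).1 hba
  have hnbr : ∀ b ∈ B, G.neighborFinset b = A := fun b hb =>
    (subset_biUnion_of_mem _ hb).antisymm fun a ha =>
      (mem_neighborFinset _ _ _).2 (hcomplete a ha b hb).symm
  refine ⟨A, B, hdisj, ?_, fun a b => ⟨fun hab => ?_, ?_⟩⟩
  · calc #A * #B = ∑ _b ∈ B, #A := by rw [sum_const, smul_eq_mul, mul_comm]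
      _ = ∑ b ∈ B, G.degree b :=
        sum_congr rfl fun b hb => by rw [← hnbr b hb, card_neighborFinset_eq_degree]
      _ = #G.edgeFinset := (sum_degree_neighborFinset_eq_and_eq_of_sq_eq hG hx hμ hu0 hu).1
  · rcases hcover u rfl hab with ha | hb
    · exact .inr ⟨ha, by rw [← hnbr a ha]; exact (mem_neighborFinset _ _ _).2 hab⟩
    · exact .inl ⟨by rw [← hnbr b hb]; exact (mem_neighborFinset _ _ _).2 hab.symm, hb⟩
  · rintro (⟨ha, hb⟩ | ⟨ha, hb⟩)
    · exact hcomplete a ha b hb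
    · exact (hcomplete b hb a ha).symm

end

section

variable {V : Type} [DecidableEq V] {A B : Finset V}

noncomputable def perronVector (A B : Finset V) : V → ℝ :=
  fun w => if w ∈ A then √(#B : ℝ) else if w ∈ B then √(#A : ℝ) else 0

lemma perronVector_ne_zero (h : 0 < #A * #B) : perronVector A B ≠ 0 := by
  obtain ⟨a, ha⟩ := card_pos.1 (Nat.pos_of_mul_pos_right h)
  refine Function.ne_iff.2 ⟨a, ?_⟩
  simp only [perronVector, ha, if_true, Pi.zero_apply, Real.sqrt_ne_zero']
  exact_mod_cast Nat.pos_of_mul_pos_left h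

variable [Fintype V] {G : SimpleGraph V} [DecidableRel G.Adj]

lemma neighborFinset_eq_ite (hAB : Disjoint A B)
    (hadj : ∀ a b, G.Adj a b ↔ (a ∈ A ∧ b ∈ B) ∨ (a ∈ B ∧ b ∈ A)) (p : V) :
    G.neighborFinset p = if p ∈ A then B else if p ∈ B then A else ∅ := by
  ext w
  rw [mem_neighborFinset, hadj]
  have := disjoint_left.1 hAB
  split_ifs <;> grind

lemma adjMatrix_mulVec_perronVector (hAB : Disjoint A B)
    (hadj : ∀ a b, G.Adj a b ↔ (a ∈ A ∧ b ∈ B) ∨ (a ∈ B ∧ b ∈ A)) :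
    G.adjMatrix ℝ *ᵥ perronVector A B = √((#A : ℝ) * #B) • perronVector A B := by
  ext p
  rw [adjMatrix_mulVec_apply, neighborFinset_eq_ite hAB hadj, Pi.smul_apply, smul_eq_mul,
    Real.sqrt_mul (Nat.cast_nonneg _)]
  have hA : ∀ w ∈ A, perronVector A B w = √(#B : ℝ) := fun w hw => if_pos hw
  have hB : ∀ w ∈ B, perronVector A B w = √(#A : ℝ) := fun w hw => by
    simp [perronVector, disjoint_right.1 hAB hw, hw]
  by_cases hpA : p ∈ A
  · rw [if_pos hpA, sum_congr rfl hB, hA p hpA, sum_const, nsmul_eq_mul, mul_assoc,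
      Real.mul_self_sqrt (Nat.cast_nonneg _), mul_comm]
  by_cases hpB : p ∈ B
  · rw [if_neg hpA, if_pos hpB, sum_congr rfl hA, hB p hpB, sum_const, nsmul_eq_mul,
      mul_right_comm, Real.mul_self_sqrt (Nat.cast_nonneg _), mul_comm]
  · simp [perronVector, hpA, hpB]

end

theorem bipartite_specRad_eq_sqrt_iff_general {V : Type} [Fintype V]
    (G : SimpleGraph V) (m : ℕ) (hm : G.edgeSet.ncard = m) (hbip : G.Colorable 2)
    (ρ : ℝ) (hρ : IsSpecRad G ρ) :
    ρ = Real.sqrt m ↔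
      ∃ A B : Finset V, Disjoint A B ∧ A.card * B.card = m ∧
        ∀ u v : V, G.Adj u v ↔ ((u ∈ A ∧ v ∈ B) ∨ (u ∈ B ∧ v ∈ A)) := by
  classical
  have hG : G.CliqueFree 3 := hbip.cliqueFree (by norm_num)
  rw [Set.ncard_eq_toFinset_card', ← edgeFinset] at hm
  subst hm
  obtain ⟨⟨x, hx0, hx⟩, hmax⟩ := hρ
  rw [adjMat_eq_adjMatrix_s1] at hx hmax
  have hsq := sq_le_card_edgeFinset_of_mulVec_eq hG hx0 hx
  constructor
  · rintro rfl
    obtain ⟨y, hy, u, hu0, hu⟩ := exists_pos_abs_le_of_mulVec_eq hx0 hx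
    exact exists_completeBipartite_of_sq_eq hG hy (Real.sq_sqrt (Nat.cast_nonneg _)) hu0 hu
  · rintro ⟨A, B, hAB, hcard, hadj⟩
    refine le_antisymm (Real.le_sqrt_of_sq_le hsq) ?_
    rcases Nat.eq_zero_or_pos #G.edgeFinset with h0 | hpos
    · rw [h0, Nat.cast_zero] at hsq ⊢
      rw [Real.sqrt_zero]
      nlinarith
    · refine hmax _ ⟨perronVector A B, perronVector_ne_zero (hcard ▸ hpos), ?_⟩
      rw [adjMatrix_mulVec_perronVector hAB hadj, ← Nat.cast_mul, hcard]

/-- For a bipartite graph `G` with `m` edges, `ρ(G) = √m` iff `G` is the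
disjoint union of a complete bipartite graph `K_{a,b}` with `a*b = m` and isolated vertices. -/
theorem bipartite_specRad_eq_sqrt_iff {V : Type} [Fintype V] [DecidableEq V]
    (G : SimpleGraph V) (m : ℕ) (hm : G.edgeSet.ncard = m) (hbip : G.Colorable 2)
    (ρ : ℝ) (hρ : IsSpecRad G ρ) :
    ρ = Real.sqrt m ↔
      ∃ A B : Finset V, Disjoint A B ∧ A.card * B.card = m ∧
        ∀ u v : V, G.Adj u v ↔ ((u ∈ A ∧ v ∈ B) ∨ (u ∈ B ∧ v ∈ A)) :=
  bipartite_specRad_eq_sqrt_iff_general G m hm hbip ρ hρ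
end

section
/- Let G be a connected graph with Perron eigenvector X = (x_1,...,x_n)^T (positive eigenvector for ρ(G)), let u, v be distinct vertices, and let v_1,...,v_s be vertices in N(v) \ N(u) (none equal to u). Let G' be obtained from G by deleting the edges v_i v and adding the edges v_i u for i = 1,...,s. If x_u ≥ x_v, then ρ(G) < ρ(G'). -/
open Matrix SimpleGraph

/-! Rotating the edges `v_i v` to `v_i u` means `G' ⊔ K(T, v) = G ⊔ K(T, u)`, where `K(T, w)` is
the star joining the leaves `T = {v_i}` to the centre `w`, and both unions are edge-disjoint.
Testing against the Perron vector `x` of `G` gives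
`xᵀA(G')x = ρ ‖x‖² + 2 (x_u - x_v) ∑_{t ∈ T} x_t ≥ ρ ‖x‖²`, so `ρ ≤ ρ'` by the Rayleigh bound.
Equality would force `x` to be an eigenvector of `A(G')` for `ρ`, but the `u`-entry of `A(G')x`
exceeds `ρ x_u` by `∑_{t ∈ T} x_t > 0`. -/

theorem Matrix.IsHermitian.posSemidef_smul_one_sub {n : Type*} [Fintype n] [DecidableEq n]
    {M : Matrix n n ℝ} (hM : M.IsHermitian) {r : ℝ}
    (hr : ∀ μ : ℝ, (∃ z : n → ℝ, z ≠ 0 ∧ M *ᵥ z = μ • z) → μ ≤ r) :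
    (r • 1 - M).PosSemidef := by
  have hle : ∀ i, hM.eigenvalues i ≤ r := fun i =>
    hr _ ⟨_, fun h => hM.eigenvectorBasis.orthonormal.ne_zero i (WithLp.ofLp_injective 2 h),
      hM.mulVec_eigenvectorBasis i⟩
  have hdiag : (diagonal fun i => r - hM.eigenvalues i).PosSemidef :=
    posSemidef_diagonal_iff.2 fun i => sub_nonneg.2 (hle i)
  convert hdiag.mul_mul_conjTranspose_same (hM.eigenvectorUnitary : Matrix n n ℝ) using 1
  calc r • 1 - M
      = Unitary.conjStarAlgAut ℝ _ hM.eigenvectorUnitary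
          (r • 1 - diagonal (RCLike.ofReal ∘ hM.eigenvalues)) := by
        rw [map_sub, map_smul, map_one, ← hM.spectral_theorem]
    _ = _ := by
        rw [Unitary.conjStarAlgAut_apply, smul_one_eq_diagonal, ← diagonal_sub]
        rfl

theorem Matrix.IsHermitian.lt_of_le_dotProduct_mulVec_of_mulVec_ne {n : Type*} [Fintype n]
    [DecidableEq n] {M : Matrix n n ℝ} (hM : M.IsHermitian) {r : ℝ}
    (hr : ∀ μ : ℝ, (∃ z : n → ℝ, z ≠ 0 ∧ M *ᵥ z = μ • z) → μ ≤ r) {μ : ℝ} {x : n → ℝ}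
    (hx : x ≠ 0) (hμ : μ * (x ⬝ᵥ x) ≤ x ⬝ᵥ M *ᵥ x) (hne : M *ᵥ x ≠ μ • x) : μ < r := by
  have hpsd := hM.posSemidef_smul_one_sub hr
  have hquad : x ⬝ᵥ (r • 1 - M) *ᵥ x = r * (x ⬝ᵥ x) - x ⬝ᵥ M *ᵥ x := by
    rw [sub_mulVec, smul_mulVec, one_mulVec, dotProduct_sub, dotProduct_smul, smul_eq_mul]
  have hrayleigh : x ⬝ᵥ M *ᵥ x ≤ r * (x ⬝ᵥ x) := by
    have := hpsd.dotProduct_mulVec_nonneg x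
    rw [star_trivial, hquad] at this
    linarith
  have hxx : 0 < x ⬝ᵥ x := by simpa using dotProduct_star_self_pos_iff.2 hx
  refine lt_of_le_of_ne (le_of_mul_le_mul_right (hμ.trans hrayleigh) hxx) fun hμr => hne ?_
  subst hμr
  have hker := (hpsd.dotProduct_mulVec_zero_iff x).1 (by rw [star_trivial, hquad]; linarith)
  rw [sub_mulVec, sub_eq_zero, smul_mulVec, one_mulVec] at hker
  exact hker.symm

variable {V : Type}

def starGraphOn (T : Finset V) (w : V) : SimpleGraph V :=
  SimpleGraph.fromRel fun a b => a ∈ T ∧ b = w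

variable {T : Finset V} {w : V}

lemma starGraphOn_adj (hw : w ∉ T) {a b : V} :
    (starGraphOn T w).Adj a b ↔ a ∈ T ∧ b = w ∨ a = w ∧ b ∈ T := by
  simp only [starGraphOn, fromRel_adj, ne_eq]
  constructor
  · rintro ⟨-, h | ⟨hb, rfl⟩⟩
    exacts [Or.inl h, Or.inr ⟨rfl, hb⟩]
  · rintro (⟨ha, rfl⟩ | ⟨rfl, hb⟩)
    exacts [⟨fun h => hw (h ▸ ha), Or.inl ⟨ha, rfl⟩⟩, ⟨fun h => hw (h ▸ hb), Or.inr ⟨hb, rfl⟩⟩]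

lemma edgeSet_starGraphOn (hw : w ∉ T) :
    (starGraphOn T w).edgeSet = (fun t => s(t, w)) '' T := by
  ext e
  induction e using Sym2.ind with
  | h a b =>
    simp only [starGraphOn, mem_edgeSet, fromRel_adj, Set.mem_image, Finset.mem_coe, Sym2.eq_iff]
    constructor
    · rintro ⟨-, ⟨ha, rfl⟩ | ⟨hb, rfl⟩⟩
      exacts [⟨a, ha, Or.inl ⟨rfl, rfl⟩⟩, ⟨b, hb, Or.inr ⟨rfl, rfl⟩⟩]
    · rintro ⟨t, ht, ⟨rfl, rfl⟩ | ⟨rfl, rfl⟩⟩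
      exacts [⟨fun h => hw (h ▸ ht), Or.inl ⟨ht, rfl⟩⟩, ⟨fun h => hw (h ▸ ht), Or.inr ⟨ht, rfl⟩⟩]

variable [Fintype V]

open Classical in
lemma adjMat_apply (G : SimpleGraph V) (a b : V) :
    adjMat G a b = if G.Adj a b then 1 else 0 := rfl

lemma adjMat_isHermitian (G : SimpleGraph V) : (adjMat G).IsHermitian := by
  ext a b
  classical
  simp only [conjTranspose_apply, adjMat_apply, star_trivial]
  exact if_congr (G.adj_comm b a) rfl rfl

lemma adjMat_sup {G H : SimpleGraph V} (h : Disjoint G H) :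
    adjMat (G ⊔ H) = adjMat G + adjMat H := by
  ext a b
  have hGH : ¬ (G.Adj a b ∧ H.Adj a b) := fun hab =>
    (disjoint_edgeSet.2 h).ne_of_mem (G.mem_edgeSet.2 hab.1) (H.mem_edgeSet.2 hab.2) rfl
  simp only [adjMat_apply, Matrix.add_apply, sup_adj]
  by_cases hG : G.Adj a b <;> by_cases hH : H.Adj a b <;> simp_all

lemma adjMat_starGraphOn_mulVec_apply [DecidableEq V] (hw : w ∉ T) (x : V → ℝ) (a : V) :
    (adjMat (starGraphOn T w) *ᵥ x) a =
      (if a = w then ∑ t ∈ T, x t else 0) + (if a ∈ T then x w else 0) := by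
  simp only [mulVec, dotProduct, adjMat_apply, starGraphOn_adj hw, ite_mul, one_mul, zero_mul]
  by_cases ha : a = w
  · subst ha
    simp [hw, Finset.sum_ite_mem]
  · by_cases haT : a ∈ T <;> simp [ha, haT]

lemma dotProduct_adjMat_starGraphOn_mulVec [DecidableEq V] (hw : w ∉ T) (x : V → ℝ) :
    x ⬝ᵥ adjMat (starGraphOn T w) *ᵥ x = 2 * x w * ∑ t ∈ T, x t := by
  simp only [dotProduct, adjMat_starGraphOn_mulVec_apply hw, mul_add, mul_ite, mul_zero,
    Finset.sum_add_distrib, Finset.sum_ite_eq', Finset.mem_univ, if_true, Finset.sum_ite_mem,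
    Finset.univ_inter]
  rw [← Finset.sum_mul]
  ring

lemma adjMat_add_starGraphOn_eq {G G' : SimpleGraph V} {u v : V} (huv : u ≠ v)
    (huT : u ∉ T) (hv : ∀ t ∈ T, G.Adj v t) (hu : ∀ t ∈ T, ¬ G.Adj u t)
    (hG' : G'.edgeSet =
      (G.edgeSet \ (fun t => s(t, v)) '' T) ∪ (fun t => s(t, u)) '' T) :
    adjMat G' + adjMat (starGraphOn T v) = adjMat G + adjMat (starGraphOn T u) := by
  have hvT : v ∉ T := fun h => (hv v h).ne rfl
  have hdisj : Disjoint G (starGraphOn T u) := by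
    rw [← disjoint_edgeSet, edgeSet_starGraphOn huT, Set.disjoint_right]
    rintro _ ⟨t, ht, rfl⟩ hut
    exact hu t ht hut.symm
  have hdisj' : Disjoint G' (starGraphOn T v) := by
    rw [← disjoint_edgeSet, edgeSet_starGraphOn hvT, Set.disjoint_right, hG']
    rintro _ ⟨t, ht, rfl⟩ (⟨-, hnot⟩ | ⟨t', ht', heq⟩)
    · exact hnot ⟨t, ht, rfl⟩
    · rcases Sym2.eq_iff.1 heq with ⟨-, h⟩ | ⟨-, h⟩
      exacts [huv h, huT (h ▸ ht)]
  have hsub : (fun t => s(t, v)) '' (T : Set V) ⊆ G.edgeSet := by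
    rintro _ ⟨t, ht, rfl⟩
    exact (hv t ht).symm
  have hsup : G' ⊔ starGraphOn T v = G ⊔ starGraphOn T u := by
    rw [← edgeSet_inj, edgeSet_sup, edgeSet_sup, hG', edgeSet_starGraphOn hvT,
      edgeSet_starGraphOn huT, Set.union_right_comm, Set.sdiff_union_of_subset hsub]
  rw [← adjMat_sup hdisj', ← adjMat_sup hdisj, hsup]

theorem rotation_increases_specRad_general {V : Type} [Fintype V]
    (G G' : SimpleGraph V)
    (ρ ρ' : ℝ) (x : V → ℝ)
    (hpos : ∀ w, 0 < x w) (heig : adjMat G *ᵥ x = ρ • x)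
    (u v : V) (huv : u ≠ v)
    (s : ℕ) (hs : 1 ≤ s) (f : Fin s → V)
    (hfv : ∀ i, G.Adj v (f i)) (hfu : ∀ i, ¬ G.Adj u (f i)) (hfne : ∀ i, f i ≠ u)
    (hG' : G'.edgeSet =
      (G.edgeSet \ Set.range fun i => s(f i, v)) ∪ Set.range fun i => s(f i, u))
    (hxu : x v ≤ x u) (hspec' : IsSpecRad G' ρ') :
    ρ < ρ' := by
  classical
  set T := Finset.univ.image f
  have huT : u ∉ T := by simpa [T] using hfne
  have hvT : v ∉ T := by simpa [T] using fun i => (hfv i).ne'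
  have hS : 0 < ∑ t ∈ T, x t :=
    Finset.sum_pos (fun t _ => hpos t) ((@Finset.univ_nonempty _ _ ⟨⟨0, hs⟩⟩).image f)
  have hrange : ∀ w, (fun t => s(t, w)) '' (T : Set V) = Set.range fun i => s(f i, w) := by
    intro w
    simp [T, ← Set.range_comp, Function.comp_def]
  have hrot : adjMat G' + adjMat (starGraphOn T v) = adjMat G + adjMat (starGraphOn T u) :=
    adjMat_add_starGraphOn_eq huv huT (by simpa [T] using hfv) (by simpa [T] using hfu)
      (by rw [hrange, hrange, hG'])
  have hquad : ρ * (x ⬝ᵥ x) ≤ x ⬝ᵥ adjMat G' *ᵥ x := by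
    have := congrArg (fun M => x ⬝ᵥ M *ᵥ x) hrot
    simp only [add_mulVec, dotProduct_add, dotProduct_adjMat_starGraphOn_mulVec hvT,
      dotProduct_adjMat_starGraphOn_mulVec huT, heig, dotProduct_smul, smul_eq_mul] at this
    nlinarith [mul_nonneg (sub_nonneg.2 hxu) hS.le]
  have hrow : (adjMat G' *ᵥ x) u = ρ * x u + ∑ t ∈ T, x t := by
    have := congrFun (congrArg (· *ᵥ x) hrot) u
    simp only [add_mulVec, Pi.add_apply, adjMat_starGraphOn_mulVec_apply hvT,
      adjMat_starGraphOn_mulVec_apply huT, heig, Pi.smul_apply, smul_eq_mul] at this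
    simpa [huv, huT] using this
  refine (adjMat_isHermitian G').lt_of_le_dotProduct_mulVec_of_mulVec_ne hspec'.2
    (fun h => (hpos u).ne' (congrFun h u)) hquad fun h => ?_
  have := congrFun h u
  simp only [hrow, Pi.smul_apply, smul_eq_mul] at this
  linarith

/-- rotation lemma: if `G'` is obtained from the connected graph `G` by
replacing the edges `v_i v` (`v_i ∈ N(v) \ N(u)`, `v_i ≠ u`) with the edges `v_i u`,
and the Perron entry of `u` is at least that of `v`, then `ρ(G) < ρ(G')`. -/
theorem rotation_increases_specRad {V : Type} [Fintype V]
    (G G' : SimpleGraph V) (hGc : G.Connected)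
    (ρ ρ' : ℝ) (x : V → ℝ)
    (hspec : IsSpecRad G ρ) (hpos : ∀ w, 0 < x w) (heig : adjMat G *ᵥ x = ρ • x)
    (u v : V) (huv : u ≠ v)
    (s : ℕ) (hs : 1 ≤ s) (f : Fin s → V) (hinj : Function.Injective f)
    (hfv : ∀ i, G.Adj v (f i)) (hfu : ∀ i, ¬ G.Adj u (f i)) (hfne : ∀ i, f i ≠ u)
    (hG' : G'.edgeSet =
      (G.edgeSet \ Set.range fun i => s(f i, v)) ∪ Set.range fun i => s(f i, u))
    (hxu : x v ≤ x u) (hspec' : IsSpecRad G' ρ') :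
    ρ < ρ' :=
  rotation_increases_specRad_general G G' ρ ρ' x hpos heig u v huv s hs f hfv hfu hfne hG' hxu
    hspec'
end

section
/- Let G_4 be the graph consisting of a vertex u* joined to the center u_0 and all r leaves of a star K_{1,r}, together with t additional pendant vertices attached to u* (so G_4 = K_1 ∨ (K_{1,r} ∪ t·K_1)). Then the spectral radius of G_4 is the largest root of f(x,t) = x⁴ − m x² − (m − t − 1)x + t(m − t − 1)/2, where m = t + 1 + 2r is the number of edges of G_4. -/
/-!
Eliminating the leaf and pendant coordinates from the eigenvalue equations (for an eigenvalue
`μ ≠ 0`, `μ x_leaf = x_{u*} + x_{u₀}` and `μ x_pendant = x_{u*}`) leaves a `2 × 2` linear system in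
`x_{u*}, x_{u₀}` whose solvability forces `f(μ) = 0`; conversely every positive root of `f` comes
with an explicit eigenvector. As `f(√(r + t + 1)) ≤ 0` and `f → ∞`, `f` has a positive root, so
`ρ > 0`, `ρ` is a root of `f`, and any root beyond `ρ` would be a larger eigenvalue.
-/

open Matrix SimpleGraph

/-- The graph `G₄ = K₁ ∨ (K_{1,r} ∪ t·K₁)`: the vertex `u* = Sum.inl ()` is joined to the
centre `u₀ = Sum.inr (Sum.inl ())`, the `r` leaves of the star, and `t` pendant vertices;
`u₀` is joined to the `r` leaves. It has `m = t + 1 + 2r` edges. -/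
def G4 (r t : ℕ) : SimpleGraph (Unit ⊕ Unit ⊕ Fin r ⊕ Fin t) :=
  SimpleGraph.fromRel (fun x y =>
    (x = Sum.inl () ∧ y ≠ Sum.inl ()) ∨
    (x = Sum.inr (Sum.inl ()) ∧ ∃ i : Fin r, y = Sum.inr (Sum.inr (Sum.inl i))))

open Polynomial Filter

/-- The paper's `f(x, t)` with `m = t + 1 + 2r` substituted. -/
noncomputable def g4Quartic (r t : ℕ) : ℝ[X] :=
  X ^ 4 - C ((t : ℝ) + 1 + 2 * r) * X ^ 2 - C (2 * (r : ℝ)) * X + C ((t : ℝ) * r)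

lemma eval_g4Quartic (r t : ℕ) (x : ℝ) :
    (g4Quartic r t).eval x = x ^ 4 - ((t : ℝ) + 1 + 2 * r) * x ^ 2 - 2 * r * x + t * r := by
  simp only [g4Quartic, eval_add, eval_sub, eval_mul, eval_pow, eval_C, eval_X]

lemma degree_g4Quartic (r t : ℕ) : (g4Quartic r t).degree = 4 := by
  unfold g4Quartic; compute_degree!

lemma monic_g4Quartic (r t : ℕ) : (g4Quartic r t).Monic := by
  unfold g4Quartic; monicity!

lemma tendsto_eval_g4Quartic_atTop (r t : ℕ) :
    Tendsto (fun x => (g4Quartic r t).eval x) atTop atTop :=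
  (g4Quartic r t).tendsto_atTop_of_leadingCoeff_nonneg
    (by rw [degree_g4Quartic]; norm_num)
    (by rw [(monic_g4Quartic r t).leadingCoeff]; exact zero_le_one)

lemma eval_g4Quartic_sqrt_nonpos (r t : ℕ) : (g4Quartic r t).eval √(r + t + 1) ≤ 0 := by
  have hsq := Real.sq_sqrt (by positivity : (0 : ℝ) ≤ r + t + 1)
  rw [eval_g4Quartic]
  -- the value is `-r² - r - 2r√(r + t + 1)`
  nlinarith [sq_nonneg (r : ℝ), (by positivity : (0 : ℝ) ≤ r * √(r + t + 1))]

lemma exists_eval_g4Quartic_eq_zero_of_nonpos {r t : ℕ} {a : ℝ} (ha : (g4Quartic r t).eval a ≤ 0) :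
    ∃ w, a ≤ w ∧ (g4Quartic r t).eval w = 0 :=
  intermediate_value_Ici (g4Quartic r t).continuousOn (tendsto_eval_g4Quartic_atTop r t) ha

namespace G4

variable {r t : ℕ}

abbrev hub : Unit ⊕ Unit ⊕ Fin r ⊕ Fin t := Sum.inl ()
abbrev center : Unit ⊕ Unit ⊕ Fin r ⊕ Fin t := Sum.inr (Sum.inl ())
abbrev leaf (i : Fin r) : Unit ⊕ Unit ⊕ Fin r ⊕ Fin t := Sum.inr (Sum.inr (Sum.inl i))
abbrev pendant (j : Fin t) : Unit ⊕ Unit ⊕ Fin r ⊕ Fin t := Sum.inr (Sum.inr (Sum.inr j))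

section MulVec

variable (x : Unit ⊕ Unit ⊕ Fin r ⊕ Fin t → ℝ)

lemma adjMat_mulVec_hub : (adjMat (G4 r t) *ᵥ x) hub =
    x center + ∑ i, x (leaf i) + ∑ j, x (pendant j) := by
  simp [adjMat, mulVec, dotProduct, Fintype.sum_sum_type, G4]; ring

lemma adjMat_mulVec_center : (adjMat (G4 r t) *ᵥ x) center = x hub + ∑ i, x (leaf i) := by
  simp [adjMat, mulVec, dotProduct, Fintype.sum_sum_type, G4]

lemma adjMat_mulVec_leaf (i : Fin r) : (adjMat (G4 r t) *ᵥ x) (leaf i) = x hub + x center := by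
  simp [adjMat, mulVec, dotProduct, Fintype.sum_sum_type, G4]

lemma adjMat_mulVec_pendant (j : Fin t) : (adjMat (G4 r t) *ᵥ x) (pendant j) = x hub := by
  simp [adjMat, mulVec, dotProduct, Fintype.sum_sum_type, G4]

end MulVec

section Eigenvector

variable {μ : ℝ} {x : Unit ⊕ Unit ⊕ Fin r ⊕ Fin t → ℝ} (hx : adjMat (G4 r t) *ᵥ x = μ • x)
include hx

lemma mul_leaf (i : Fin r) : μ * x (leaf i) = x hub + x center := by
  simpa [adjMat_mulVec_leaf] using (congrFun hx (leaf i)).symm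

lemma mul_pendant (j : Fin t) : μ * x (pendant j) = x hub := by
  simpa [adjMat_mulVec_pendant] using (congrFun hx (pendant j)).symm

lemma mul_sum_leaf : μ * ∑ i, x (leaf i) = r * (x hub + x center) := by
  simp [Finset.mul_sum, mul_leaf hx, mul_add]

lemma mul_sum_pendant : μ * ∑ j, x (pendant j) = t * x hub := by
  simp [Finset.mul_sum, mul_pendant hx]

lemma eq_zero_of_hub_of_center (hμ : μ ≠ 0) (ha : x hub = 0) (hb : x center = 0) : x = 0 := by
  funext v
  rcases v with _ | _ | i | j
  · exact ha
  · exact hb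
  · simpa [ha, hb, hμ] using mul_leaf hx i
  · simpa [ha, hμ] using mul_pendant hx j

lemma eval_g4Quartic_eq_zero (hμ : μ ≠ 0) (hx0 : x ≠ 0) : (g4Quartic r t).eval μ = 0 := by
  have hHub : μ ^ 2 * x hub = μ * x center + r * (x hub + x center) + t * x hub := by
    have := congrFun hx hub
    simp only [adjMat_mulVec_hub, Pi.smul_apply, smul_eq_mul] at this
    linear_combination -μ * this + mul_sum_leaf hx + mul_sum_pendant hx
  have hCenter : μ ^ 2 * x center = μ * x hub + r * (x hub + x center) := by
    have := congrFun hx center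
    simp only [adjMat_mulVec_center, Pi.smul_apply, smul_eq_mul] at this
    linear_combination -μ * this + mul_sum_leaf hx
  rw [eval_g4Quartic]
  by_cases ha : x hub = 0
  · have hb : x center ≠ 0 := fun hb => hx0 (eq_zero_of_hub_of_center hx hμ ha hb)
    refine (mul_eq_zero.1 ?_).resolve_right hb
    linear_combination (μ + r) * hHub + (μ ^ 2 - r - t) * hCenter
  · refine (mul_eq_zero.1 ?_).resolve_right ha
    linear_combination (μ ^ 2 - r) * hHub + (μ + r) * hCenter

end Eigenvector

lemma exists_eigenvector_of_root {z : ℝ} (hz : 0 < z) (hf : (g4Quartic r t).eval z = 0) :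
    ∃ x : Unit ⊕ Unit ⊕ Fin r ⊕ Fin t → ℝ, x ≠ 0 ∧ adjMat (G4 r t) *ᵥ x = z • x := by
  rw [eval_g4Quartic] at hf
  -- the leaf, pendant and centre rows hold identically; the hub row amounts to `f(z) = 0`
  let x : Unit ⊕ Unit ⊕ Fin r ⊕ Fin t → ℝ := fun
    | Sum.inl _ => z ^ 2 - r
    | Sum.inr (Sum.inl _) => z + r
    | Sum.inr (Sum.inr (Sum.inl _)) => z + 1
    | Sum.inr (Sum.inr (Sum.inr _)) => (z ^ 2 - r) / z
  refine ⟨x, fun h => ?_, funext fun v => ?_⟩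
  · have := congrFun h center
    simp only [x, Pi.zero_apply] at this
    linarith [(r.cast_nonneg : (0 : ℝ) ≤ r)]
  rcases v with ⟨⟨⟩⟩ | ⟨⟨⟩⟩ | i | j
  · rw [adjMat_mulVec_hub]
    simp only [Finset.sum_const, Finset.card_univ, Fintype.card_fin, nsmul_eq_mul,
      Pi.smul_apply, smul_eq_mul, x]
    field_simp
    linear_combination -hf
  · rw [adjMat_mulVec_center]
    simp only [Finset.sum_const, Finset.card_univ, Fintype.card_fin, nsmul_eq_mul,
      Pi.smul_apply, smul_eq_mul, x]
    ring
  · rw [adjMat_mulVec_leaf]; simp only [Pi.smul_apply, smul_eq_mul, x]; ring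
  · rw [adjMat_mulVec_pendant]; simp only [Pi.smul_apply, smul_eq_mul, x]; field_simp

end G4

theorem specRad_G4_largest_root_general (r t : ℕ)
    (ρ : ℝ) (hρ : IsSpecRad (G4 r t) ρ) :
    (ρ ^ 4 - (t + 1 + 2 * r : ℝ) * ρ ^ 2 - ((t + 1 + 2 * r : ℝ) - t - 1) * ρ
        + t * ((t + 1 + 2 * r : ℝ) - t - 1) / 2 = 0) ∧
    ∀ y : ℝ, ρ < y →
      0 < y ^ 4 - (t + 1 + 2 * r : ℝ) * y ^ 2 - ((t + 1 + 2 * r : ℝ) - t - 1) * y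
        + t * ((t + 1 + 2 * r : ℝ) - t - 1) / 2 := by
  obtain ⟨⟨x, hx0, hx⟩, hmax⟩ := hρ
  have hf : ∀ y : ℝ, y ^ 4 - (t + 1 + 2 * r : ℝ) * y ^ 2 - ((t + 1 + 2 * r : ℝ) - t - 1) * y
      + t * ((t + 1 + 2 * r : ℝ) - t - 1) / 2 = (g4Quartic r t).eval y := fun y => by
    rw [eval_g4Quartic]; ring
  simp only [hf]
  have le_of_root : ∀ w, 0 < w → (g4Quartic r t).eval w = 0 → w ≤ ρ :=
    fun w hw hroot => hmax w (G4.exists_eigenvector_of_root hw hroot)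
  have hs : 0 < √(r + t + 1) := by positivity
  obtain ⟨w, hsw, hw⟩ := exists_eval_g4Quartic_eq_zero_of_nonpos (eval_g4Quartic_sqrt_nonpos r t)
  have hρpos : 0 < ρ := by linarith [le_of_root w (by linarith) hw]
  refine ⟨G4.eval_g4Quartic_eq_zero hx hρpos.ne' hx0, fun y hy => lt_of_not_ge fun hle => ?_⟩
  obtain ⟨w, hyw, hw⟩ := exists_eval_g4Quartic_eq_zero_of_nonpos hle
  linarith [le_of_root w (by linarith) hw]

/-- the spectral radius of `G₄` is the largest root of
`f(x,t) = x⁴ - m x² - (m - t - 1) x + t (m - t - 1)/2` where `m = t + 1 + 2r`. -/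
theorem specRad_G4_largest_root (r t : ℕ) (hr : 1 ≤ r)
    (ρ : ℝ) (hρ : IsSpecRad (G4 r t) ρ) :
    (ρ ^ 4 - (t + 1 + 2 * r : ℝ) * ρ ^ 2 - ((t + 1 + 2 * r : ℝ) - t - 1) * ρ
        + t * ((t + 1 + 2 * r : ℝ) - t - 1) / 2 = 0) ∧
    ∀ y : ℝ, ρ < y →
      0 < y ^ 4 - (t + 1 + 2 * r : ℝ) * y ^ 2 - ((t + 1 + 2 * r : ℝ) - t - 1) * y
        + t * ((t + 1 + 2 * r : ℝ) - t - 1) / 2 :=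
  specRad_G4_largest_root_general r t ρ hρ
end

section
/- Every connected graph on at least 2 vertices that contains no path on 5 vertices as a subgraph and no cycle of length 4 as a subgraph is either a tree of diameter at most 3 (i.e., a star K_{1,r} with r ≥ 1 or a double star D_{a,b}), or the graph S^1_{r+1} obtained from a star K_{1,r} (r ≥ 2) by adding one edge between two leaves. -/
open Matrix SimpleGraph

/-- The star `K_{1,r}` with centre `0`. -/
def starG (r : ℕ) : SimpleGraph (Fin (r + 1)) :=
  SimpleGraph.fromRel (fun x _ => x = 0)

/-- `S¹_{r+1}`: the star `K_{1,r}` together with one extra edge joining the leaves `1`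
and `2` (for `r ≥ 2`; for `r = 2` this is a triangle). -/
def S1G (r : ℕ) : SimpleGraph (Fin (r + 1)) :=
  SimpleGraph.fromRel (fun x y => x = 0 ∨ (x = 1 ∧ y = 2))

/-- The double star `D_{a,b}`: the centres `Sum.inl ()` and `Sum.inr (Sum.inl ())` are
adjacent, the first centre has `a` pendant leaves, the second has `b` pendant leaves. -/
def doubleStarG (a b : ℕ) : SimpleGraph (Unit ⊕ Unit ⊕ Fin a ⊕ Fin b) :=
  SimpleGraph.fromRel (fun x y =>
    (x = Sum.inl () ∧ (y = Sum.inr (Sum.inl ()) ∨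
        ∃ i : Fin a, y = Sum.inr (Sum.inr (Sum.inl i)))) ∨
    (x = Sum.inr (Sum.inl ()) ∧ ∃ j : Fin b, y = Sum.inr (Sum.inr (Sum.inr j))))

/-- The cycle `C₄` on four vertices. -/
def C4G : SimpleGraph (Fin 4) :=
  SimpleGraph.fromEdgeSet {s(0,1), s(1,2), s(2,3), s(3,0)}

/-- The theta graph `θ(1,2,2)`, i.e. `K₄` minus one edge. -/
def theta122G : SimpleGraph (Fin 4) :=
  SimpleGraph.fromEdgeSet {s(0,1), s(1,2), s(2,3), s(3,0), s(0,2)}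

/-!
In each case we find a clique `K` of `G` (a triangle, the middle edge of a `P₄` when `G` is
triangle-free, or the neighbour of a leaf when `G` has no `P₄`) such that a vertex outside `K`
with a neighbour in `K` has no other neighbour, since a second one would close a `P₅`, a `C₄`, a
triangle or a `P₄` respectively. By connectivity every vertex outside `K` is then a pendant
vertex hanging at `K`. Around a triangle, pendants at two different corners would span a `P₅`,
so they all hang at one corner and `G ≅ S¹_{r+1}`; around the middle edge of a `P₄` both ends
carry pendants and `G` is a double star; otherwise `G` is a star.
-/

section

variable {V : Type} {G : SimpleGraph V}

lemma SimpleGraph.CliqueFree.not_adj_of_adj_of_adj (h : G.CliqueFree 3) {a b c : V}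
    (hab : G.Adj a b) (hbc : G.Adj b c) : ¬ G.Adj a c := by
  classical
  exact fun hac => h {a, b, c} (is3Clique_triple_iff.2 ⟨hab, hac, hbc⟩)

lemma containsSub_pathGraph_five {a b c d e : V} (hab : G.Adj a b) (hbc : G.Adj b c)
    (hcd : G.Adj c d) (hde : G.Adj d e) (hac : a ≠ c) (had : a ≠ d) (hae : a ≠ e)
    (hbd : b ≠ d) (hbe : b ≠ e) (hce : c ≠ e) :
    ContainsSub (pathGraph 5) G := by
  refine ⟨⟨![a, b, c, d, e], fun {i j} hij => ?_⟩, fun i j hij => ?_⟩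
  · rw [pathGraph_adj] at hij
    fin_cases i <;> fin_cases j <;> simp_all [G.adj_comm]
  · have := hab.ne; have := hbc.ne; have := hcd.ne; have := hde.ne
    fin_cases i <;> fin_cases j <;> simp_all

lemma containsSub_C4G {a b c d : V} (hab : G.Adj a b) (hbc : G.Adj b c) (hcd : G.Adj c d)
    (hda : G.Adj d a) (hac : a ≠ c) (hbd : b ≠ d) : ContainsSub C4G G := by
  refine ⟨⟨![a, b, c, d], fun {i j} hij => ?_⟩, fun i j hij => ?_⟩
  · simp only [C4G, fromEdgeSet_adj, Set.mem_insert_iff, Set.mem_singleton_iff] at hij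
    fin_cases i <;> fin_cases j <;> simp_all [G.adj_comm]
  · have := hab.ne; have := hbc.ne; have := hcd.ne; have := hda.ne
    fin_cases i <;> fin_cases j <;> simp_all

lemma SimpleGraph.Preconnected.exists_adj_mem_of_pendant (h : G.Preconnected) {S : Set V}
    (hS : S.Nonempty)
    (hpend : ∀ w ∉ S, ∀ s ∈ S, G.Adj w s → ∀ t, G.Adj w t → t ∈ S) :
    ∀ w ∉ S, ∃ s ∈ S, G.Adj w s := by
  obtain ⟨s₀, hs₀⟩ := hS
  suffices ∀ {u v} (p : G.Walk u v), v ∈ S → u ∈ S ∨ ∃ s ∈ S, G.Adj u s from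
    fun w hw => ((this (h w s₀).some hs₀).resolve_left hw)
  intro u v p hv
  induction p with
  | nil => exact Or.inl hv
  | @cons u x _ hux _ ih =>
    rcases ih hv with hx | ⟨s, hs, hxs⟩
    · exact Or.inr ⟨x, hx, hux⟩
    · by_cases hx : x ∈ S
      · exact Or.inr ⟨x, hx, hux⟩
      · exact Or.inl (hpend x hx s hs hxs u hux.symm)

lemma exists_equiv_fin_val_apply [Fintype V] {n k : ℕ} (hn : Fintype.card V = n)
    (f : Fin k → V) (hf : Function.Injective f) :
    ∃ e : V ≃ Fin n, ∀ i, (e (f i) : ℕ) = i := by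
  classical
  have hk : k ≤ n := hn ▸ by simpa using Fintype.card_le_of_injective f hf
  have hcompl : Fintype.card {v // v ∉ Set.range f} = n - k := by
    rw [Fintype.card_subtype_compl, hn, Set.card_range_of_injective hf, Fintype.card_fin]
  refine ⟨(Equiv.sumCompl (· ∈ Set.range f)).symm.trans <|
    ((Equiv.ofInjective f hf).symm.sumCongr (Fintype.equivFinOfCardEq hcompl)).trans <|
      finSumFinEquiv.trans (finCongr (Nat.add_sub_cancel' hk)), fun i => ?_⟩
  simp [Equiv.sumCompl_symm_apply_of_pos (Set.mem_range_self i)]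

lemma exists_iso_starG_of_adj_iff [Fintype V] (hcard : 2 ≤ Fintype.card V) (c : V)
    (hadj : ∀ u v, G.Adj u v ↔ u ≠ v ∧ (u = c ∨ v = c)) :
    ∃ r, 1 ≤ r ∧ Nonempty (G ≃g starG r) := by
  obtain ⟨e, he⟩ := exists_equiv_fin_val_apply (n := Fintype.card V - 1 + 1) (by omega) ![c]
    (Function.injective_of_subsingleton _)
  have hc : e c = 0 := Fin.ext (he 0)
  refine ⟨_, by omega, ⟨e, fun {u v} => ?_⟩⟩
  simp only [starG, fromRel_adj, ← hc, e.apply_eq_iff_eq, e.injective.ne_iff, hadj]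

lemma exists_iso_S1G_of_adj_iff [Fintype V] {c x y : V} (hcx : c ≠ x) (hcy : c ≠ y)
    (hxy : x ≠ y)
    (hadj : ∀ u v, G.Adj u v ↔ u ≠ v ∧ (u = c ∨ v = c ∨ (u = x ∧ v = y) ∨ (u = y ∧ v = x))) :
    ∃ r, 2 ≤ r ∧ Nonempty (G ≃g S1G r) := by
  have hf : Function.Injective ![c, x, y] := by
    intro i j h
    fin_cases i <;> fin_cases j <;> simp_all [eq_comm]
  obtain ⟨s, hs⟩ : ∃ s, Fintype.card V = s + 2 + 1 :=
    ⟨Fintype.card V - 3, by have := Fintype.card_le_of_injective _ hf; simp at this; omega⟩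
  obtain ⟨e, he⟩ := exists_equiv_fin_val_apply hs ![c, x, y] hf
  have hc : e c = 0 := Fin.ext (he 0)
  have hx : e x = 1 := Fin.ext (by simpa using he 1)
  have hy : e y = 2 := Fin.ext (by rw [Fin.val_two]; simpa using he 2)
  refine ⟨_, le_add_self, ⟨e, fun {u v} => ?_⟩⟩
  simp only [S1G, fromRel_adj, ← hc, ← hx, ← hy, e.apply_eq_iff_eq, e.injective.ne_iff, hadj]
  tauto

/-- The right-hand side mirrors the relation defining `doubleStarG`. -/
lemma adj_iff_of_forall_adj_eq_or_eq {p q : V} (hpq : G.Adj p q)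
    (hedge : ∀ u v, G.Adj u v → u = p ∨ u = q ∨ v = p ∨ v = q) (u v : V) :
    G.Adj u v ↔ u ≠ v ∧
      (((u = p ∧ (v = q ∨ (G.Adj p v ∧ v ≠ q))) ∨ (u = q ∧ (G.Adj q v ∧ v ≠ p))) ∨
       ((v = p ∧ (u = q ∨ (G.Adj p u ∧ u ≠ q))) ∨ (v = q ∧ (G.Adj q u ∧ u ≠ p)))) := by
  refine ⟨fun h => ⟨h.ne, ?_⟩, ?_⟩
  · have := h.symm
    rcases hedge u v h with rfl | rfl | rfl | rfl <;> tauto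
  · rintro ⟨-, (⟨rfl, rfl | ⟨h, -⟩⟩ | ⟨rfl, h, -⟩) | (⟨rfl, rfl | ⟨h, -⟩⟩ | ⟨rfl, h, -⟩)⟩
    exacts [hpq, h, h, hpq.symm, h.symm, h.symm]

lemma exists_iso_doubleStarG_of_adj_center [Finite V] {p q : V} (hpq : G.Adj p q)
    (hnb : ∀ w, G.Adj p w → ¬ G.Adj q w)
    (hatt : ∀ w, w ≠ p → w ≠ q → G.Adj p w ∨ G.Adj q w)
    (hedge : ∀ u v, G.Adj u v → u = p ∨ u = q ∨ v = p ∨ v = q)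
    (hA : ∃ w, G.Adj p w ∧ w ≠ q) (hB : ∃ w, G.Adj q w ∧ w ≠ p) :
    ∃ a b, 1 ≤ a ∧ 1 ≤ b ∧ Nonempty (G ≃g doubleStarG a b) := by
  let A := {w // G.Adj p w ∧ w ≠ q}
  let B := {w // G.Adj q w ∧ w ≠ p}
  have : Nonempty A := let ⟨w, hw⟩ := hA; ⟨⟨w, hw⟩⟩
  have : Nonempty B := let ⟨w, hw⟩ := hB; ⟨⟨w, hw⟩⟩
  let eA := (Finite.equivFin A).symm
  let eB := (Finite.equivFin B).symm
  let g : Unit ⊕ Unit ⊕ Fin (Nat.card A) ⊕ Fin (Nat.card B) → V :=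
    Sum.elim (fun _ => p) (Sum.elim (fun _ => q) (Sum.elim (fun i => eA i) (fun j => eB j)))
  have hAp : ∀ i, (eA i : V) ≠ p := fun i => (eA i).2.1.ne'
  have hAq : ∀ i, ¬ G.Adj q (eA i) := fun i => hnb _ (eA i).2.1
  have hBq : ∀ j, (eB j : V) ≠ q := fun j => (eB j).2.1.ne'
  have hBp : ∀ j, ¬ G.Adj p (eB j) := fun j h => hnb _ h (eB j).2.1
  have hAB : ∀ i j, (eA i : V) ≠ eB j := fun i j h => hBp j (h ▸ (eA i).2.1)
  have hgp : ∀ s, g s = p ↔ s = .inl () := by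
    rintro (_ | _ | i | j) <;> simp [g, hpq.ne', hAp, (eB _).2.2]
  have hgq : ∀ s, g s = q ↔ s = .inr (.inl ()) := by
    rintro (_ | _ | i | j) <;> simp [g, hpq.ne, hBq, (eA _).2.2]
  have hgA : ∀ s, (G.Adj p (g s) ∧ g s ≠ q) ↔ ∃ i, s = .inr (.inr (.inl i)) := by
    rintro (_ | _ | i | j) <;> simp [g, hBp, (eA _).2]
  have hgB : ∀ s, (G.Adj q (g s) ∧ g s ≠ p) ↔ ∃ j, s = .inr (.inr (.inr j)) := by
    rintro (_ | _ | i | j) <;> simp [g, hAq, (eB _).2]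
  have hg : g.Bijective := by
    refine ⟨?_, fun w => ?_⟩
    · refine Function.injective_of_subsingleton _ |>.sumElim
        (Function.injective_of_subsingleton _ |>.sumElim
        ((Subtype.val_injective.comp eA.injective).sumElim
          (Subtype.val_injective.comp eB.injective) hAB) ?_) ?_
      · rintro _ (i | j)
        exacts [(eA i).2.2.symm, (eB j).2.1.ne]
      · rintro _ (_ | i | j)
        exacts [hpq.ne, (hAp i).symm, (eB j).2.2.symm]
    · by_cases hwp : w = p
      · exact ⟨.inl (), hwp.symm⟩
      by_cases hwq : w = q
      · exact ⟨.inr (.inl ()), hwq.symm⟩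
      rcases hatt w hwp hwq with h | h
      · exact ⟨.inr (.inr (.inl (eA.symm ⟨w, h, hwq⟩))), by simp [g]⟩
      · exact ⟨.inr (.inr (.inr (eB.symm ⟨w, h, hwp⟩))), by simp [g]⟩
  refine ⟨_, _, Nat.card_pos, Nat.card_pos, ⟨RelIso.symm ⟨Equiv.ofBijective g hg, ?_⟩⟩⟩
  intro s t
  rw [Equiv.ofBijective_apply, Equiv.ofBijective_apply, adj_iff_of_forall_adj_eq_or_eq hpq hedge]
  simp only [hgp, hgq, hgA, hgB, hg.1.ne_iff, doubleStarG, fromRel_adj]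

lemma eq_of_adj_of_triangle (hP5 : ¬ ContainsSub (pathGraph 5) G) (hC4 : ¬ ContainsSub C4G G)
    {a b c u t : V} (hab : G.Adj a b) (hbc : G.Adj b c) (hac : G.Adj a c) (hub : u ≠ b)
    (huc : u ≠ c) (hua : G.Adj u a) (hut : G.Adj u t) : t = a := by
  by_contra hta
  by_cases htb : t = b
  · subst htb
    exact hC4 (containsSub_C4G hua hac hbc.symm hut.symm huc hab.ne)
  by_cases htc : t = c
  · subst htc
    exact hC4 (containsSub_C4G hua hab hbc hut.symm hub hac.ne)
  exact hP5 (containsSub_pathGraph_five hut.symm hua hab hbc hta htb htc hub huc hac.ne)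

lemma not_adj_of_triangle (hP5 : ¬ ContainsSub (pathGraph 5) G) (hC4 : ¬ ContainsSub C4G G)
    {a b c u w : V} (hab : G.Adj a b) (hbc : G.Adj b c) (hac : G.Adj a c) (hub : u ≠ b)
    (huc : u ≠ c) (hua : G.Adj u a) (hwa : w ≠ a) (hwc : w ≠ c) : ¬ G.Adj w b := by
  intro hwb
  by_cases huw : u = w
  · subst huw
    exact hab.ne (eq_of_adj_of_triangle hP5 hC4 hab hbc hac hub huc hua hwb).symm
  exact hP5 (containsSub_pathGraph_five hua hac hbc.symm hwb.symm huc hub huw hab.ne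
    (Ne.symm hwa) (Ne.symm hwc))

lemma forall_adj_of_triangle (hP5 : ¬ ContainsSub (pathGraph 5) G) (hC4 : ¬ ContainsSub C4G G)
    {c d e u : V} (hcd : G.Adj c d) (hde : G.Adj d e) (hce : G.Adj c e)
    (hatt : ∀ w, w ≠ c → w ≠ d → w ≠ e → G.Adj w c ∨ G.Adj w d ∨ G.Adj w e)
    (hud : u ≠ d) (hue : u ≠ e) (huc : G.Adj u c) :
    ∀ w, w ≠ c → w ≠ d → w ≠ e → G.Adj w c := by
  intro w hwc hwd hwe
  rcases hatt w hwc hwd hwe with h | h | h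
  · exact h
  · exact absurd h (not_adj_of_triangle hP5 hC4 hcd hde hce hud hue huc hwc hwe)
  · exact absurd h (not_adj_of_triangle hP5 hC4 hce hde.symm hcd hue hud huc hwc hwd)

lemma exists_iso_S1G_of_apex [Fintype V] (hP5 : ¬ ContainsSub (pathGraph 5) G)
    (hC4 : ¬ ContainsSub C4G G) {c d e : V} (hcd : G.Adj c d) (hde : G.Adj d e)
    (hce : G.Adj c e) (hout : ∀ w, w ≠ c → w ≠ d → w ≠ e → G.Adj w c) :
    ∃ r, 2 ≤ r ∧ Nonempty (G ≃g S1G r) := by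
  have hpend : ∀ w t, w ≠ c → w ≠ d → w ≠ e → G.Adj w t → t = c := fun w t hwc hwd hwe =>
    eq_of_adj_of_triangle hP5 hC4 hcd hde hce hwd hwe (hout w hwc hwd hwe)
  refine exists_iso_S1G_of_adj_iff hcd.ne hce.ne hde.ne fun u v => ?_
  by_cases hu : u = c ∨ u = d ∨ u = e
  · by_cases hv : v = c ∨ v = d ∨ v = e
    · rcases hu with rfl | rfl | rfl <;> rcases hv with rfl | rfl | rfl <;>
        simp [hcd, hde, hce, hcd.symm, hde.symm, hce.symm, hcd.ne, hde.ne, hce.ne, hcd.ne',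
          hde.ne', hce.ne']
    · simp only [not_or] at hv
      obtain ⟨hvc, hvd, hve⟩ := hv
      rw [show G.Adj u v ↔ u = c from
        ⟨fun h => hpend v u hvc hvd hve h.symm, fun h => h ▸ (hout v hvc hvd hve).symm⟩]
      grind
  · simp only [not_or] at hu
    obtain ⟨huc, hud, hue⟩ := hu
    rw [show G.Adj u v ↔ v = c from
      ⟨fun h => hpend u v huc hud hue h, fun h => h ▸ hout u huc hud hue⟩]
    grind

lemma exists_iso_S1G_of_triangle [Fintype V] (hconn : G.Preconnected)
    (hP5 : ¬ ContainsSub (pathGraph 5) G) (hC4 : ¬ ContainsSub C4G G) {x y z : V}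
    (hxy : G.Adj x y) (hyz : G.Adj y z) (hxz : G.Adj x z) :
    ∃ r, 2 ≤ r ∧ Nonempty (G ≃g S1G r) := by
  have hatt : ∀ w, w ≠ x → w ≠ y → w ≠ z → G.Adj w x ∨ G.Adj w y ∨ G.Adj w z := by
    have := hconn.exists_adj_mem_of_pendant (S := {x, y, z}) ⟨x, by simp⟩ <| by
      simp only [Set.mem_insert_iff, Set.mem_singleton_iff, not_or]
      rintro w ⟨hwx, hwy, hwz⟩ s (rfl | rfl | rfl) hws t hwt
      · exact Or.inl (eq_of_adj_of_triangle hP5 hC4 hxy hyz hxz hwy hwz hws hwt)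
      · exact Or.inr (Or.inl
          (eq_of_adj_of_triangle hP5 hC4 hxy.symm hxz hyz hwx hwz hws hwt))
      · exact Or.inr (Or.inr
          (eq_of_adj_of_triangle hP5 hC4 hxz.symm hxy hyz.symm hwx hwy hws hwt))
    simpa [not_or, and_imp] using this
  by_cases hout : ∃ u, u ≠ x ∧ u ≠ y ∧ u ≠ z
  · obtain ⟨u, hux, huy, huz⟩ := hout
    rcases hatt u hux huy huz with h | h | h
    · exact exists_iso_S1G_of_apex hP5 hC4 hxy hyz hxz
        (forall_adj_of_triangle hP5 hC4 hxy hyz hxz hatt huy huz h)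
    · exact exists_iso_S1G_of_apex hP5 hC4 hxy.symm hxz hyz
        (forall_adj_of_triangle hP5 hC4 hxy.symm hxz hyz
          (fun w hwy hwx hwz => or_left_comm.1 (hatt w hwx hwy hwz)) hux huz h)
    · exact exists_iso_S1G_of_apex hP5 hC4 hxz.symm hxy hyz.symm
        (forall_adj_of_triangle hP5 hC4 hxz.symm hxy hyz.symm
          (fun w hwz hwx hwy => (hatt w hwx hwy hwz).rotate.rotate) hux huy h)
  · push Not at hout
    exact exists_iso_S1G_of_apex hP5 hC4 hxy hyz hxz fun w hwx hwy hwz =>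
      absurd (hout w hwx hwy) hwz

lemma eq_of_adj_of_path (hP5 : ¬ ContainsSub (pathGraph 5) G) (hC4 : ¬ ContainsSub C4G G)
    (htf : G.CliqueFree 3) {b c d w t : V} (hbc : G.Adj b c) (hcd : G.Adj c d) (hbd : b ≠ d)
    (hwc : w ≠ c) (hwb : G.Adj w b) (hwt : G.Adj w t) : t = b := by
  by_contra htb
  by_cases htc : t = c
  · exact htf.not_adj_of_adj_of_adj hwb hbc (htc ▸ hwt)
  by_cases htd : t = d
  · exact hC4 (containsSub_C4G hwb hbc hcd (htd ▸ hwt).symm hwc hbd)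
  have hwd : w ≠ d := by
    rintro rfl
    exact htf.not_adj_of_adj_of_adj hbc hcd hwb.symm
  exact hP5 (containsSub_pathGraph_five hwt.symm hwb hbc hcd htb htc htd hwc hwd hbd)

lemma exists_iso_doubleStarG_of_path [Finite V] (hconn : G.Preconnected)
    (hP5 : ¬ ContainsSub (pathGraph 5) G) (hC4 : ¬ ContainsSub C4G G) (htf : G.CliqueFree 3)
    {a b c d : V} (hab : G.Adj a b) (hbc : G.Adj b c) (hcd : G.Adj c d) (hac : a ≠ c)
    (hbd : b ≠ d) :
    ∃ a b, 1 ≤ a ∧ 1 ≤ b ∧ Nonempty (G ≃g doubleStarG a b) := by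
  have hb : ∀ w, w ≠ c → G.Adj w b → ∀ t, G.Adj w t → t = b := fun _ hwc hwb _ =>
    eq_of_adj_of_path hP5 hC4 htf hbc hcd hbd hwc hwb
  have hc : ∀ w, w ≠ b → G.Adj w c → ∀ t, G.Adj w t → t = c := fun _ hwb hwc _ =>
    eq_of_adj_of_path hP5 hC4 htf hbc.symm hab.symm hac.symm hwb hwc
  have hatt : ∀ w, w ≠ b → w ≠ c → G.Adj w b ∨ G.Adj w c := by
    have := hconn.exists_adj_mem_of_pendant (S := {b, c}) ⟨b, by simp⟩ <| by
      simp only [Set.mem_insert_iff, Set.mem_singleton_iff, not_or]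
      rintro w ⟨hwb, hwc⟩ s (rfl | rfl) hws t hwt
      exacts [Or.inl (hb w hwc hws t hwt), Or.inr (hc w hwb hws t hwt)]
    simpa [not_or, and_imp] using this
  refine exists_iso_doubleStarG_of_adj_center hbc
    (fun w hbw => htf.not_adj_of_adj_of_adj hbc.symm hbw)
    (fun w hwb hwc => (hatt w hwb hwc).imp Adj.symm Adj.symm) (fun u v huv => ?_)
    ⟨a, hab.symm, hac⟩ ⟨d, hcd, hbd.symm⟩
  by_cases hu : u = b ∨ u = c
  · tauto
  simp only [not_or] at hu
  rcases hatt u hu.1 hu.2 with h | h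
  · exact Or.inr (Or.inr (Or.inl (hb u hu.2 h v huv)))
  · exact Or.inr (Or.inr (Or.inr (hc u hu.1 h v huv)))

lemma exists_iso_starG_of_not_path [Fintype V] (hconn : G.Preconnected)
    (hcard : 2 ≤ Fintype.card V)
    (hP4 : ¬ ∃ a b c d, G.Adj a b ∧ G.Adj b c ∧ G.Adj c d ∧ a ≠ c ∧ b ≠ d) :
    ∃ r, 1 ≤ r ∧ Nonempty (G ≃g starG r) := by
  have : Nontrivial V := Fintype.one_lt_card_iff_nontrivial.1 hcard
  obtain ⟨u, -⟩ := exists_pair_ne V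
  obtain ⟨v, huv⟩ := hconn.exists_adj_of_nontrivial u
  obtain ⟨l, c, hlc, hl⟩ : ∃ l c, G.Adj l c ∧ ∀ t, G.Adj l t → t = c := by
    by_cases hu : ∀ t, G.Adj u t → t = v
    · exact ⟨u, v, huv, hu⟩
    push Not at hu
    obtain ⟨u', huu', hu'v⟩ := hu
    exact ⟨v, u, huv.symm, fun t hvt =>
      by_contra fun htu => hP4 ⟨u', u, v, t, huu'.symm, huv, hvt, hu'v, Ne.symm htu⟩⟩
  have hpend : ∀ w, w ≠ c → G.Adj w c → ∀ t, G.Adj w t → t = c := by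
    intro w hwc hw t hwt
    by_contra htc
    by_cases hwl : w = l
    · exact htc (hl t (hwl ▸ hwt))
    · exact hP4 ⟨t, w, c, l, hwt.symm, hw, hlc.symm, htc, hwl⟩
  have hatt : ∀ w, w ≠ c → G.Adj w c := by
    simpa using hconn.exists_adj_mem_of_pendant (S := {c}) ⟨c, rfl⟩ (by simpa using hpend)
  refine exists_iso_starG_of_adj_iff hcard c fun x y => ⟨fun h => ⟨h.ne, ?_⟩, ?_⟩
  · by_cases hx : x = c
    · exact Or.inl hx
    · exact Or.inr (hpend x hx (hatt x hx) y h)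
  · rintro ⟨hne, rfl | rfl⟩
    · exact (hatt y (Ne.symm hne)).symm
    · exact hatt x hne

end

/-- a connected graph on at least two vertices containing neither `P₅` nor
`C₄` as a subgraph is a star `K_{1,r}` (`r ≥ 1`), a double star `D_{a,b}` (`a,b ≥ 1`),
or `S¹_{r+1}` (`r ≥ 2`). -/
theorem P5_C4_free_structure {V : Type} [Fintype V] (G : SimpleGraph V)
    (hcard : 2 ≤ Fintype.card V) (hconn : G.Connected)
    (hP5 : ¬ ContainsSub (SimpleGraph.pathGraph 5) G)
    (hC4 : ¬ ContainsSub C4G G) :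
    (∃ r : ℕ, 1 ≤ r ∧ Nonempty (G ≃g starG r)) ∨
    (∃ a b : ℕ, 1 ≤ a ∧ 1 ≤ b ∧ Nonempty (G ≃g doubleStarG a b)) ∨
    (∃ r : ℕ, 2 ≤ r ∧ Nonempty (G ≃g S1G r)) := by
  by_cases htf : G.CliqueFree 3
  · by_cases hP4 : ∃ a b c d, G.Adj a b ∧ G.Adj b c ∧ G.Adj c d ∧ a ≠ c ∧ b ≠ d
    · obtain ⟨a, b, c, d, hab, hbc, hcd, hac, hbd⟩ := hP4
      exact Or.inr (Or.inl (exists_iso_doubleStarG_of_path hconn.preconnected hP5 hC4 htf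
        hab hbc hcd hac hbd))
    · exact Or.inl (exists_iso_starG_of_not_path hconn.preconnected hcard hP4)
  · obtain ⟨x, y, z, hxy, hxz, hyz⟩ : ∃ x y z, G.Adj x y ∧ G.Adj x z ∧ G.Adj y z := by
      classical
      simpa [CliqueFree, is3Clique_iff] using htf
    exact Or.inr (Or.inr (exists_iso_S1G_of_triangle hconn.preconnected hP5 hC4 hxy hyz hxz))
end

section
/- Every connected graph that contains no path on 5 vertices as a subgraph is one of: a graph with a 4-cycle as spanning subgraph (C_4, θ(1,2,2) = K_4 minus an edge, or K_4); the graph S^1_{r+1} for some r ≥ 2; a double star D_{a,b} with a,b ≥ 1; or a star K_{1,r} with r ≥ 0. -/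
open Matrix SimpleGraph

/-!
If `G` contains a 4-cycle, a vertex outside it adjacent to it would extend the cycle to a `P₅`,
so `G` is the 4-cycle together with some of its chords. Otherwise, if some vertex `c` is adjacent
to all others, `G - c` has at most one edge (two edges sharing a vertex close a 4-cycle through
`c`, two disjoint ones form a `P₅` through `c`), so `G` is a star or `S¹_{r+1}`. If no vertex is
universal, connectivity provides a path `a b c d`; the absence of `P₅` and `C₄` forces every vertex
and every edge to meet `{b, c}`, and a common neighbour of `b` and `c` would, together with
non-neighbours of `b` and of `c`, form a `P₅`. Hence `G` is a double star with centres `b`, `c`.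
-/

theorem Fintype.exists_equiv_fin_extend_of_card_eq {V : Type*} [Fintype V] {k n : ℕ}
    (hn : Fintype.card V = n) (hk : k ≤ n) (f : Fin k → V) (hf : Function.Injective f) :
    ∃ e : Fin n ≃ V, ∀ i, e (Fin.castLE hk i) = f i := by
  let e₀ := (Fintype.equivFinOfCardEq hn).symm
  obtain ⟨σ, hσ⟩ := Equiv.Perm.exists_extending_pair f (e₀ ∘ Fin.castLE hk) hf
    (e₀.injective.comp (Fin.castLE_injective hk))
  exact ⟨e₀.trans σ.symm, fun i => σ.symm_apply_eq.mpr (hσ i).symm⟩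

namespace SimpleGraph

variable {V : Type} {G : SimpleGraph V}

theorem Connected.forall_of_adj_closed (hG : G.Connected) {P : V → Prop} {u : V} (hu : P u)
    (hP : ∀ a b, G.Adj a b → P a → P b) (v : V) : P v := by
  by_contra hv
  obtain ⟨p⟩ := hG.preconnected u v
  obtain ⟨d, -, hd, hd'⟩ := p.exists_boundary_dart {w | P w} hu hv
  exact hd' (hP _ _ d.adj hd)

def Iso.ofEquivAdj {W : Type*} {H : SimpleGraph W} (e : W ≃ V)
    (he : ∀ i j, H.Adj i j ↔ G.Adj (e i) (e j)) : G ≃g H :=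
  (⟨e, (he _ _).symm⟩ : H ≃g G).symm

theorem nonempty_iso_starG [Fintype V] (c : V)
    (hadj : ∀ u v, G.Adj u v ↔ u ≠ v ∧ (u = c ∨ v = c)) : ∃ r, Nonempty (G ≃g starG r) := by
  have hcard : Fintype.card V = Fintype.card V - 1 + 1 :=
    (Nat.sub_add_cancel (Fintype.card_pos_iff.2 ⟨c⟩)).symm
  obtain ⟨e, he⟩ := Fintype.exists_equiv_fin_extend_of_card_eq hcard (Nat.le_add_left 1 _)
    (fun _ => c) (Function.injective_of_subsingleton _)
  obtain rfl : e 0 = c := by simpa using he 0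
  refine ⟨_, ⟨Iso.ofEquivAdj e fun i j => ?_⟩⟩
  simp [starG, hadj, e.apply_eq_iff_eq]

theorem nonempty_iso_S1G [Fintype V] {c y z : V} (hcy : c ≠ y) (hcz : c ≠ z) (hyz : y ≠ z)
    (hadj : ∀ u v, G.Adj u v ↔ u ≠ v ∧ (u = c ∨ v = c ∨ s(u, v) = s(y, z))) :
    ∃ r, 2 ≤ r ∧ Nonempty (G ≃g S1G r) := by
  have hf : Function.Injective ![c, y, z] := by
    intro i j h
    fin_cases i <;> fin_cases j <;> simp_all [eq_comm]
  obtain ⟨m, hm⟩ : ∃ m, Fintype.card V = m + 3 := by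
    have := Fintype.card_le_of_injective _ hf
    rw [Fintype.card_fin] at this
    exact ⟨_, (Nat.sub_add_cancel this).symm⟩
  obtain ⟨e, he⟩ := Fintype.exists_equiv_fin_extend_of_card_eq hm (by omega) _ hf
  obtain rfl : e 0 = c := by simpa using he 0
  obtain rfl : e 1 = y := (congrArg e (by ext; simp)).trans (he 1)
  obtain rfl : e 2 = z := (congrArg e (by ext; simp)).trans (he 2)
  refine ⟨m + 2, le_add_self, ⟨Iso.ofEquivAdj e fun i j => ?_⟩⟩
  simp only [S1G, fromRel_adj, hadj, Sym2.eq_iff, ne_eq, e.apply_eq_iff_eq]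
  tauto

theorem nonempty_iso_doubleStarG [Fintype V] {b c p q : V} (hbc : G.Adj b c)
    (hp : G.Adj b p) (hpc : p ≠ c) (hq : G.Adj c q) (hqb : q ≠ b)
    (hcommon : ∀ w, G.Adj b w → ¬ G.Adj c w)
    (hcover : ∀ v, v = b ∨ v = c ∨ G.Adj b v ∨ G.Adj c v)
    (hedge : ∀ u v, G.Adj u v → u = b ∨ u = c ∨ v = b ∨ v = c) :
    ∃ m n : ℕ, 1 ≤ m ∧ 1 ≤ n ∧ Nonempty (G ≃g doubleStarG m n) := by
  classical
  let A := {v // G.Adj b v ∧ v ≠ c}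
  let B := {v // G.Adj c v ∧ v ≠ b}
  let g : Unit ⊕ Unit ⊕ A ⊕ B → V :=
    Sum.elim (fun _ => b) (Sum.elim (fun _ => c) (Sum.elim Subtype.val Subtype.val))
  have hg : Function.Bijective g := by
    constructor
    · rintro (⟨⟩|⟨⟩|⟨x, hx⟩|⟨x, hx⟩) (⟨⟩|⟨⟩|⟨y, hy⟩|⟨y, hy⟩) h <;>
        simp only [g, Sum.elim_inl, Sum.elim_inr] at h <;> grind [SimpleGraph.irrefl]
    · intro v
      by_cases hvb : v = b
      · exact ⟨.inl (), hvb.symm⟩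
      by_cases hvc : v = c
      · exact ⟨.inr (.inl ()), hvc.symm⟩
      rcases ((hcover v).resolve_left hvb).resolve_left hvc with h | h
      · exact ⟨.inr (.inr (.inl ⟨v, h, hvc⟩)), rfl⟩
      · exact ⟨.inr (.inr (.inr ⟨v, h, hvb⟩)), rfl⟩
  let e := (Equiv.sumCongr (Equiv.refl _) (Equiv.sumCongr (Equiv.refl _)
      (Equiv.sumCongr (Fintype.equivFin A).symm (Fintype.equivFin B).symm))).trans
    (Equiv.ofBijective g hg)
  refine ⟨Fintype.card A, Fintype.card B, Fintype.card_pos_iff.2 ⟨⟨p, hp, hpc⟩⟩,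
    Fintype.card_pos_iff.2 ⟨⟨q, hq, hqb⟩⟩, ⟨Iso.ofEquivAdj e ?_⟩⟩
  rintro (⟨⟩|⟨⟩|i|i) (⟨⟩|⟨⟩|j|j) <;>
    simp only [doubleStarG, fromRel_adj, e, g, Equiv.trans_apply, Equiv.sumCongr_apply,
      Equiv.coe_refl, Equiv.ofBijective_apply, Sum.map_inl, Sum.map_inr, Sum.elim_inl,
      Sum.elim_inr, id_eq] <;>
    grind [SimpleGraph.adj_comm]

theorem bijective_vecCons_four {a b c d : V} (hab : a ≠ b) (hac : a ≠ c) (had : a ≠ d)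
    (hbc : b ≠ c) (hbd : b ≠ d) (hcd : c ≠ d) (hcover : ∀ v, v = a ∨ v = b ∨ v = c ∨ v = d) :
    Function.Bijective ![a, b, c, d] := by
  refine ⟨fun i j hij => ?_, fun v => ?_⟩
  · fin_cases i <;> fin_cases j <;> simp_all [eq_comm]
  · rcases hcover v with rfl | rfl | rfl | rfl
    exacts [⟨0, rfl⟩, ⟨1, rfl⟩, ⟨2, rfl⟩, ⟨3, rfl⟩]

theorem fourCycle_classification {a b c d : V} (hab : G.Adj a b) (hbc : G.Adj b c)
    (hcd : G.Adj c d) (hda : G.Adj d a) (hac : a ≠ c) (hbd : b ≠ d)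
    (hcover : ∀ v, v = a ∨ v = b ∨ v = c ∨ v = d) :
    Nonempty (G ≃g C4G) ∨ Nonempty (G ≃g theta122G) ∨
      Nonempty (G ≃g completeGraph (Fin 4)) := by
  have habcd := bijective_vecCons_four hab.ne hac hda.ne' hbc.ne hbd hcd.ne hcover
  have hbcda := bijective_vecCons_four hbc.ne hbd hab.ne' hcd.ne hac.symm hda.ne
    (by intro v; rcases hcover v with h | h | h | h <;> simp [h])
  by_cases hac' : G.Adj a c <;> by_cases hbd' : G.Adj b d
  · refine .inr (.inr ⟨Iso.ofEquivAdj (.ofBijective _ habcd) fun i j => ?_⟩)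
    fin_cases i <;> fin_cases j <;> simp_all [G.adj_comm]
  · refine .inr (.inl ⟨Iso.ofEquivAdj (.ofBijective _ habcd) fun i j => ?_⟩)
    fin_cases i <;> fin_cases j <;> simp_all [theta122G, G.adj_comm]
  · refine .inr (.inl ⟨Iso.ofEquivAdj (.ofBijective _ hbcda) fun i j => ?_⟩)
    fin_cases i <;> fin_cases j <;> simp_all [theta122G, G.adj_comm]
  · refine .inl ⟨Iso.ofEquivAdj (.ofBijective _ habcd) fun i j => ?_⟩
    fin_cases i <;> fin_cases j <;> simp_all [C4G, G.adj_comm]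

theorem containsSub_pathGraph_five {a b c d e : V} (hab : G.Adj a b) (hbc : G.Adj b c)
    (hcd : G.Adj c d) (hde : G.Adj d e) (hac : a ≠ c) (had : a ≠ d) (hae : a ≠ e)
    (hbd : b ≠ d) (hbe : b ≠ e) (hce : c ≠ e) : ContainsSub (pathGraph 5) G := by
  have := hab.ne; have := hbc.ne; have := hcd.ne; have := hde.ne
  refine ⟨⟨![a, b, c, d, e], fun {i j} hij => ?_⟩, fun i j hij => ?_⟩
  · rw [pathGraph_adj] at hij
    fin_cases i <;> fin_cases j <;> simp_all [G.adj_comm]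
  · fin_cases i <;> fin_cases j <;> simp_all [eq_comm]

def IsUniversalVertex (G : SimpleGraph V) (c : V) : Prop := ∀ v, v ≠ c → G.Adj c v

def FourCycleFree (G : SimpleGraph V) : Prop :=
  ∀ a b c d, G.Adj a b → G.Adj b c → G.Adj c d → G.Adj d a → a = c ∨ b = d

theorem mem_of_adj_of_fourCycle (hP5 : ¬ ContainsSub (pathGraph 5) G) {a b c d t : V}
    (hab : G.Adj a b) (hbc : G.Adj b c) (hcd : G.Adj c d) (hda : G.Adj d a) (hac : a ≠ c)
    (hbd : b ≠ d) (hat : G.Adj a t) : t = b ∨ t = c ∨ t = d := by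
  by_contra! h
  exact hP5 (containsSub_pathGraph_five hat.symm hab hbc hcd h.1 h.2.1 h.2.2 hac hda.ne' hbd)

theorem Connected.eq_of_fourCycle (hconn : G.Connected) (hP5 : ¬ ContainsSub (pathGraph 5) G)
    {a b c d : V} (hab : G.Adj a b) (hbc : G.Adj b c) (hcd : G.Adj c d) (hda : G.Adj d a)
    (hac : a ≠ c) (hbd : b ≠ d) (v : V) : v = a ∨ v = b ∨ v = c ∨ v = d := by
  refine hconn.forall_of_adj_closed (P := fun v => v = a ∨ v = b ∨ v = c ∨ v = d) (.inl rfl)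
    (fun s t hst hs => ?_) v
  rcases hs with rfl | rfl | rfl | rfl
  · have := mem_of_adj_of_fourCycle hP5 hab hbc hcd hda hac hbd hst; tauto
  · have := mem_of_adj_of_fourCycle hP5 hbc hcd hda hab hbd hac.symm hst; tauto
  · have := mem_of_adj_of_fourCycle hP5 hcd hda hab hbc hac.symm hbd.symm hst; tauto
  · have := mem_of_adj_of_fourCycle hP5 hda hab hbc hcd hbd.symm hac hst; tauto

theorem eq_of_adj_of_adj_of_isUniversalVertex (hC4 : G.FourCycleFree) {c y u v : V}
    (hc : G.IsUniversalVertex c) (hyc : y ≠ c) (huc : u ≠ c) (hvc : v ≠ c)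
    (hyu : G.Adj y u) (hyv : G.Adj y v) : u = v :=
  (hC4 y u c v hyu (hc u huc).symm (hc v hvc) hyv.symm).resolve_left hyc

theorem sym2_eq_of_isUniversalVertex (hP5 : ¬ ContainsSub (pathGraph 5) G)
    (hC4 : G.FourCycleFree) {c u v y z : V} (hc : G.IsUniversalVertex c)
    (huc : u ≠ c) (hvc : v ≠ c) (hyc : y ≠ c) (hzc : z ≠ c) (huv : G.Adj u v) (hyz : G.Adj y z) :
    s(u, v) = s(y, z) := by
  by_cases huy : u = y
  · subst huy
    rw [eq_of_adj_of_adj_of_isUniversalVertex hC4 hc huc hvc hzc huv hyz]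
  by_cases huz : u = z
  · subst huz
    rw [eq_of_adj_of_adj_of_isUniversalVertex hC4 hc huc hvc hyc huv hyz.symm, Sym2.eq_swap]
  by_cases hvy : v = y
  · subst hvy
    rw [eq_of_adj_of_adj_of_isUniversalVertex hC4 hc hvc huc hzc huv.symm hyz, Sym2.eq_swap]
  by_cases hvz : v = z
  · subst hvz
    rw [eq_of_adj_of_adj_of_isUniversalVertex hC4 hc hvc huc hyc huv.symm hyz.symm]
  exact (hP5 (containsSub_pathGraph_five huv (hc v hvc).symm (hc y hyc) hyz huc huy huz
    hvy hvz hzc.symm)).elim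

theorem S1G_or_starG_of_isUniversalVertex [Fintype V] (hP5 : ¬ ContainsSub (pathGraph 5) G)
    (hC4 : G.FourCycleFree) {c : V} (hc : G.IsUniversalVertex c) :
    (∃ r : ℕ, 2 ≤ r ∧ Nonempty (G ≃g S1G r)) ∨ ∃ r : ℕ, Nonempty (G ≃g starG r) := by
  have adj_of_eq_c : ∀ u v, u ≠ v → (u = c ∨ v = c) → G.Adj u v := by
    rintro u v huv (rfl | rfl)
    exacts [hc v huv.symm, (hc u huv).symm]
  by_cases hyz : ∃ y z, y ≠ c ∧ z ≠ c ∧ G.Adj y z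
  · obtain ⟨y, z, hyc, hzc, hyz⟩ := hyz
    refine .inl (nonempty_iso_S1G hyc.symm hzc.symm hyz.ne fun u v => ⟨fun huv => ?_, ?_⟩)
    · refine ⟨huv.ne, ?_⟩
      by_cases huc : u = c; · exact .inl huc
      by_cases hvc : v = c; · exact .inr (.inl hvc)
      exact .inr (.inr (sym2_eq_of_isUniversalVertex hP5 hC4 hc huc hvc hyc hzc huv hyz))
    · rintro ⟨huv, h | h | h⟩
      · exact adj_of_eq_c u v huv (.inl h)
      · exact adj_of_eq_c u v huv (.inr h)
      · rcases Sym2.eq_iff.1 h with ⟨rfl, rfl⟩ | ⟨rfl, rfl⟩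
        exacts [hyz, hyz.symm]
  · push Not at hyz
    refine .inr (nonempty_iso_starG c fun u v =>
      ⟨fun huv => ⟨huv.ne, ?_⟩, fun h => adj_of_eq_c u v h.1 h.2⟩)
    by_contra! h
    exact hyz u v h.1 h.2 huv

theorem Connected.exists_adj_adj_not_adj (hconn : G.Connected) {v : V}
    (hv : ¬ G.IsUniversalVertex v) : ∃ s t, G.Adj v s ∧ G.Adj s t ∧ t ≠ v ∧ ¬ G.Adj v t := by
  by_contra! h
  refine hv fun w hw => (hconn.forall_of_adj_closed (P := fun w => w = v ∨ G.Adj v w)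
    (.inl rfl) (fun s t hst hs => ?_) w).resolve_left hw
  by_cases htv : t = v
  · exact .inl htv
  rcases hs with rfl | hs
  exacts [.inr hst, .inr (h s t hs hst htv)]

theorem Connected.exists_path_four (hconn : G.Connected) (hnu : ∀ c, ¬ G.IsUniversalVertex c) :
    ∃ a b c d, G.Adj a b ∧ G.Adj b c ∧ G.Adj c d ∧ a ≠ c ∧ a ≠ d ∧ b ≠ d := by
  obtain ⟨v⟩ := hconn.nonempty
  obtain ⟨s, t, hvs, hst, htv, -⟩ := hconn.exists_adj_adj_not_adj (hnu v)
  obtain ⟨s', t', hss', hs't', ht's, hst'⟩ := hconn.exists_adj_adj_not_adj (hnu s)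
  by_cases hs'v : s' = v
  · subst hs'v
    exact ⟨t', s', s, t, hs't'.symm, hss'.symm, hst, ht's, fun h => hst' (h ▸ hst), htv.symm⟩
  · exact ⟨v, s, s', t', hvs, hss', hs't', Ne.symm hs'v, fun h => hst' (h ▸ hvs.symm), ht's.symm⟩

theorem eq_or_eq_of_adj_of_adj_of_path_four (hP5 : ¬ ContainsSub (pathGraph 5) G)
    (hC4 : G.FourCycleFree) {a b c d s t : V} (hab : G.Adj a b) (hbc : G.Adj b c)
    (hcd : G.Adj c d) (hac : a ≠ c) (had : a ≠ d) (hbd : b ≠ d) (hbs : G.Adj b s)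
    (hst : G.Adj s t) (hsc : s ≠ c) : t = b ∨ t = c := by
  by_contra! ht
  obtain ⟨htb, htc⟩ := ht
  have hda : ¬ G.Adj d a := fun hda => (hC4 a b c d hab hbc hcd hda).elim hac hbd
  by_cases hsd : s = d
  · rw [hsd] at hst
    by_cases hta : t = a
    · exact hda (hta ▸ hst)
    · exact hP5 (containsSub_pathGraph_five hst.symm hcd.symm hbc.symm hab.symm htc htb hta
        hbd.symm had.symm hac.symm)
  by_cases hsa : s = a
  · rw [hsa] at hst
    by_cases htd : t = d
    · exact hda (htd ▸ hst).symm
    · exact hP5 (containsSub_pathGraph_five hst.symm hab hbc hcd htb htc htd hac had hbd)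
  by_cases htd : t = d
  · exact hP5 (containsSub_pathGraph_five hab hbs (htd ▸ hst) hcd.symm (Ne.symm hsa) had hac
      hbd hbc.ne hsc)
  by_cases hta : t = a
  · exact hP5 (containsSub_pathGraph_five hcd.symm hbc.symm hbs (hta ▸ hst) hbd.symm
      (Ne.symm hsd) had.symm (Ne.symm hsc) hac.symm hab.ne')
  exact hP5 (containsSub_pathGraph_five hst.symm hbs.symm hbc hcd htb htc htd hsc hsd hbd)

theorem Connected.doubleStarG_of_forall_not_isUniversalVertex [Fintype V]
    (hconn : G.Connected) (hP5 : ¬ ContainsSub (pathGraph 5) G) (hC4 : G.FourCycleFree)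
    (hnu : ∀ c, ¬ G.IsUniversalVertex c) :
    ∃ m n : ℕ, 1 ≤ m ∧ 1 ≤ n ∧ Nonempty (G ≃g doubleStarG m n) := by
  obtain ⟨a, b, c, d, hab, hbc, hcd, hac, had, hbd⟩ := hconn.exists_path_four hnu
  have hb {s t : V} := eq_or_eq_of_adj_of_adj_of_path_four (s := s) (t := t) hP5 hC4
    hab hbc hcd hac had hbd
  have hc {s t : V} := eq_or_eq_of_adj_of_adj_of_path_four (s := s) (t := t) hP5 hC4
    hcd.symm hbc.symm hab.symm hbd.symm had.symm hac.symm
  have hcover : ∀ v, v = b ∨ v = c ∨ G.Adj b v ∨ G.Adj c v := by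
    refine hconn.forall_of_adj_closed (P := fun v => v = b ∨ v = c ∨ G.Adj b v ∨ G.Adj c v)
      (.inl rfl) fun s t hst hs => ?_
    rcases hs with rfl | rfl | hs | hs
    · exact .inr (.inr (.inl hst))
    · exact .inr (.inr (.inr hst))
    · by_cases hsc : s = c
      · exact .inr (.inr (.inr (hsc ▸ hst)))
      · exact (hb hs hst hsc).imp_right .inl
    · by_cases hsb : s = b
      · exact .inr (.inr (.inl (hsb ▸ hst)))
      · exact (hc hs hst hsb).elim (.inr ∘ .inl) .inl
  have hedge : ∀ u v, G.Adj u v → u = b ∨ u = c ∨ v = b ∨ v = c := by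
    intro u v huv
    rcases hcover u with h | h | hu | hu
    · exact .inl h
    · exact .inr (.inl h)
    · by_cases huc : u = c
      · exact .inr (.inl huc)
      · exact .inr (.inr (hb hu huv huc))
    · by_cases hub : u = b
      · exact .inl hub
      · exact .inr (.inr (hc hu huv hub).symm)
  have hcommon : ∀ w, G.Adj b w → ¬ G.Adj c w := by
    intro w hbw hcw
    obtain ⟨p, hpb, hbp⟩ : ∃ p, p ≠ b ∧ ¬ G.Adj b p := by
      simpa [IsUniversalVertex] using hnu b
    obtain ⟨q, hqc, hcq⟩ : ∃ q, q ≠ c ∧ ¬ G.Adj c q := by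
      simpa [IsUniversalVertex] using hnu c
    have hcp : G.Adj c p := by
      rcases hcover p with h | h | h | h
      exacts [(hpb h).elim, (hbp (h ▸ hbc)).elim, (hbp h).elim, h]
    have hbq : G.Adj b q := by
      rcases hcover q with h | h | h | h
      exacts [(hcq (h ▸ hbc.symm)).elim, (hqc h).elim, h, (hcq h).elim]
    exact hP5 (containsSub_pathGraph_five hcp.symm hcw hbw.symm hbq
      (fun h => hbp (h ▸ hbw)) hpb (fun h => hbp (h ▸ hbq)) hbc.ne' (Ne.symm hqc)
      (fun h => hcq (h ▸ hcw)))
  exact nonempty_iso_doubleStarG hbc hab.symm hac hcd hbd.symm hcommon hcover hedge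

end SimpleGraph

/-- a connected `P₅`-free graph is `C₄`, `θ(1,2,2) = K₄` minus an edge, `K₄`,
`S¹_{r+1}` (`r ≥ 2`), a double star `D_{a,b}` (`a,b ≥ 1`), or a star `K_{1,r}` (`r ≥ 0`). -/
theorem P5_free_structure {V : Type} [Fintype V] (G : SimpleGraph V)
    (hconn : G.Connected)
    (hP5 : ¬ ContainsSub (SimpleGraph.pathGraph 5) G) :
    Nonempty (G ≃g C4G) ∨
    Nonempty (G ≃g theta122G) ∨
    Nonempty (G ≃g (completeGraph (Fin 4))) ∨
    (∃ r : ℕ, 2 ≤ r ∧ Nonempty (G ≃g S1G r)) ∨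
    (∃ a b : ℕ, 1 ≤ a ∧ 1 ≤ b ∧ Nonempty (G ≃g doubleStarG a b)) ∨
    (∃ r : ℕ, Nonempty (G ≃g starG r)) := by
  by_cases hC4 : G.FourCycleFree
  · refine .inr (.inr (.inr ?_))
    by_cases hu : ∃ c, G.IsUniversalVertex c
    · obtain ⟨c, hc⟩ := hu
      exact (S1G_or_starG_of_isUniversalVertex hP5 hC4 hc).imp_right Or.inr
    · push Not at hu
      exact .inr (.inl (hconn.doubleStarG_of_forall_not_isUniversalVertex hP5 hC4 hu))
  · unfold FourCycleFree at hC4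
    push Not at hC4
    obtain ⟨a, b, c, d, hab, hbc, hcd, hda, hac, hbd⟩ := hC4
    rcases fourCycle_classification hab hbc hcd hda hac hbd
      (hconn.eq_of_fourCycle hP5 hab hbc hcd hda hac hbd) with h | h | h
    exacts [.inl h, .inr (.inl h), .inr (.inr (.inl h))]
end

section
/- Let G be a θ(1,3,3)-free graph, u* a vertex of G, and H the subgraph of G induced by the neighborhood N(u*). If H contains a 4-cycle u_1u_2u_3u_4u_1, and u, v are two distinct vertices on this 4-cycle, then u and v have no common neighbor outside N[u*] (i.e., N(u) ∩ N(v) ∩ (V(G) \ N[u*]) = ∅). -/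
open Matrix SimpleGraph

/-- The theta graph `θ(1,3,3)`: vertices `0` and `1` joined by the edge `01` and the two
paths `0-2-3-1` and `0-4-5-1` of length three. -/
def theta133 : SimpleGraph (Fin 6) :=
  SimpleGraph.fromEdgeSet {s(0,1), s(0,2), s(2,3), s(3,1), s(0,4), s(4,5), s(5,1)}

/-!
A common neighbour `w ∉ N[u*]` of two vertices of the cycle closes a copy of `θ(1,3,3)`.
If they are consecutive, say `a, b` on the cycle `abcd`, take the edge `u*a` with the paths
`u*-b-w-a` and `u*-c-d-a`; if they are opposite, say `a, c`, take the edge `bc` with the paths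
`b-a-w-c` and `b-u*-d-c`.
-/

theorem containsSub_theta133 {V : Type} {G : SimpleGraph V} {x y a b c d : V}
    (hxy : G.Adj x y) (hxa : G.Adj x a) (hab : G.Adj a b) (hby : G.Adj b y)
    (hxc : G.Adj x c) (hcd : G.Adj c d) (hdy : G.Adj d y)
    (hxb : x ≠ b) (hxd : x ≠ d) (hya : y ≠ a) (hyc : y ≠ c)
    (hac : a ≠ c) (had : a ≠ d) (hbc : b ≠ c) (hbd : b ≠ d) :
    ContainsSub theta133 G := by
  have hle : theta133 ≤ G.comap ![x, y, a, b, c, d] := by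
    rw [theta133, fromEdgeSet_le]
    simp [Set.insert_subset_iff, *]
  refine ⟨⟨![x, y, a, b, c, d], fun h => hle h⟩, ?_⟩
  show Function.Injective ![x, y, a, b, c, d]
  rw [← List.nodup_ofFn]
  simp [*, hxy.ne, hxa.ne, hab.ne, hxc.ne, hcd.ne, hby.ne.symm, hdy.ne.symm]

structure IsFourCycleInNeighborSet {V : Type} (G : SimpleGraph V) (s : V) (c : Fin 4 → V) :
    Prop where
  injective : Function.Injective c
  adj_succ : ∀ i, G.Adj (c i) (c (i + 1))
  adj_center : ∀ i, G.Adj s (c i)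

namespace IsFourCycleInNeighborSet

variable {V : Type} {G : SimpleGraph V} {s w : V} {c : Fin 4 → V}

theorem ne_of_not_adj_center (hC : IsFourCycleInNeighborSet G s c) (hwN : ¬ G.Adj s w)
    (i : Fin 4) : w ≠ c i :=
  fun h => hwN (h ▸ hC.adj_center i)

theorem not_adj_adj_succ (hfree : ¬ ContainsSub theta133 G)
    (hC : IsFourCycleInNeighborSet G s c) (hws : w ≠ s) (hwN : ¬ G.Adj s w) (i : Fin 4) :
    ¬ (G.Adj (c i) w ∧ G.Adj (c (i + 1)) w) := by
  rintro ⟨hi, hi1⟩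
  have h23 : G.Adj (c (i + 2)) (c (i + 3)) := by simpa [add_assoc] using hC.adj_succ (i + 2)
  have h30 : G.Adj (c (i + 3)) (c i) := by simpa [add_assoc] using hC.adj_succ (i + 3)
  exact hfree <| containsSub_theta133 (hC.adj_center i) (hC.adj_center (i + 1)) hi1 hi.symm
    (hC.adj_center (i + 2)) h23 h30 hws.symm (hC.adj_center _).ne
    (hC.injective.ne (by simp)) (hC.injective.ne (by simp)) (hC.injective.ne (by simp))
    (hC.injective.ne (by simp)) (hC.ne_of_not_adj_center hwN _) (hC.ne_of_not_adj_center hwN _)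

theorem not_adj_adj_add_two (hfree : ¬ ContainsSub theta133 G)
    (hC : IsFourCycleInNeighborSet G s c) (hws : w ≠ s) (hwN : ¬ G.Adj s w) (i : Fin 4) :
    ¬ (G.Adj (c i) w ∧ G.Adj (c (i + 2)) w) := by
  rintro ⟨hi, hi2⟩
  have h12 : G.Adj (c (i + 1)) (c (i + 2)) := by simpa [add_assoc] using hC.adj_succ (i + 1)
  have h32 : G.Adj (c (i + 3)) (c (i + 2)) := by
    simpa [add_assoc] using (hC.adj_succ (i + 2)).symm
  exact hfree <| containsSub_theta133 h12 (hC.adj_succ i).symm hi hi2.symm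
    (hC.adj_center (i + 1)).symm (hC.adj_center (i + 3)) h32
    (hC.ne_of_not_adj_center hwN _).symm (hC.injective.ne (by simp)) (hC.injective.ne (by simp))
    (hC.adj_center _).ne' (hC.adj_center _).ne' (hC.injective.ne (by simp)) hws
    (hC.ne_of_not_adj_center hwN _)

theorem not_adj_adj_of_ne (hfree : ¬ ContainsSub theta133 G)
    (hC : IsFourCycleInNeighborSet G s c) (hws : w ≠ s) (hwN : ¬ G.Adj s w) {i j : Fin 4}
    (hij : i ≠ j) : ¬ (G.Adj (c i) w ∧ G.Adj (c j) w) := by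
  obtain ⟨k, rfl⟩ : ∃ k, j = i + k := ⟨j - i, (add_sub_cancel i j).symm⟩
  obtain rfl | rfl | rfl | rfl : k = 0 ∨ k = 1 ∨ k = 2 ∨ k = 3 := by omega
  · simp at hij
  · exact hC.not_adj_adj_succ hfree hws hwN i
  · exact hC.not_adj_adj_add_two hfree hws hwN i
  · simpa [add_assoc, and_comm] using hC.not_adj_adj_succ hfree hws hwN (i + 3)

end IsFourCycleInNeighborSet

theorem no_common_neighbor_outside_general {V : Type} (G : SimpleGraph V)
    (hfree : ¬ ContainsSub theta133 G) (ustar u1 u2 u3 u4 : V)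
    (h1 : u1 ∈ G.neighborSet ustar) (h2 : u2 ∈ G.neighborSet ustar)
    (h3 : u3 ∈ G.neighborSet ustar) (h4 : u4 ∈ G.neighborSet ustar)
    (hdist : ([u1, u2, u3, u4] : List V).Pairwise (· ≠ ·))
    (h12 : G.Adj u1 u2) (h23 : G.Adj u2 u3) (h34 : G.Adj u3 u4) (h41 : G.Adj u4 u1)
    (u v : V) (hu : u ∈ ({u1, u2, u3, u4} : Set V)) (hv : v ∈ ({u1, u2, u3, u4} : Set V))
    (huv : u ≠ v)
    (w : V) (hw1 : w ≠ ustar) (hw2 : w ∉ G.neighborSet ustar) :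
    ¬ (G.Adj u w ∧ G.Adj v w) := by
  rintro ⟨huw, hvw⟩
  have hC : IsFourCycleInNeighborSet G ustar ![u1, u2, u3, u4] := by
    refine ⟨?_, fun i => ?_, fun i => ?_⟩
    · rw [← List.nodup_ofFn]
      simpa using hdist
    all_goals fin_cases i <;> assumption
  obtain ⟨i, rfl⟩ : ∃ i, ![u1, u2, u3, u4] i = u := by
    simpa [Fin.exists_fin_succ, eq_comm] using hu
  obtain ⟨j, rfl⟩ : ∃ j, ![u1, u2, u3, u4] j = v := by
    simpa [Fin.exists_fin_succ, eq_comm] using hv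
  exact hC.not_adj_adj_of_ne hfree hw1 hw2 (ne_of_apply_ne _ huv) ⟨huw, hvw⟩

/-- in a `θ(1,3,3)`-free graph `G`, if the neighbourhood of `u*` contains a
4-cycle `u₁u₂u₃u₄u₁`, then no two distinct vertices of this 4-cycle have a common
neighbour outside `N[u*]`. -/
theorem no_common_neighbor_outside {V : Type} [Fintype V] (G : SimpleGraph V)
    (hfree : ¬ ContainsSub theta133 G) (ustar u1 u2 u3 u4 : V)
    (h1 : u1 ∈ G.neighborSet ustar) (h2 : u2 ∈ G.neighborSet ustar)
    (h3 : u3 ∈ G.neighborSet ustar) (h4 : u4 ∈ G.neighborSet ustar)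
    (hdist : ([u1, u2, u3, u4] : List V).Pairwise (· ≠ ·))
    (h12 : G.Adj u1 u2) (h23 : G.Adj u2 u3) (h34 : G.Adj u3 u4) (h41 : G.Adj u4 u1)
    (u v : V) (hu : u ∈ ({u1, u2, u3, u4} : Set V)) (hv : v ∈ ({u1, u2, u3, u4} : Set V))
    (huv : u ≠ v)
    (w : V) (hw1 : w ≠ ustar) (hw2 : w ∉ G.neighborSet ustar) :
    ¬ (G.Adj u w ∧ G.Adj v w) :=
  no_common_neighbor_outside_general G hfree ustar u1 u2 u3 u4 h1 h2 h3 h4 hdist h12 h23 h34 h41 u v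
    hu hv huv w hw1 hw2
end

section
/- Let G be a θ(1,3,3)-free graph and u* a vertex of G. Then the subgraph of G induced by N(u*) contains no path on 5 vertices. -/
open Matrix SimpleGraph

/-!
A path `v₀v₁v₂v₃v₄` in `N(u)` together with `u` spans a fan, and the fan contains `θ(1,3,3)`
with branch vertices `u` and `v₂`: the edge `uv₂` and the paths `uv₀v₁v₂`, `uv₄v₃v₂`.
-/

namespace SimpleGraph

variable {α β : Type}

/-- The apex is `none`. -/
def cone (F : SimpleGraph α) : SimpleGraph (Option α) where
  Adj
    | none, none => False
    | none, some _ | some _, none => True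
    | some a, some b => F.Adj a b
  symm := ⟨by
    rintro (_ | a) (_ | b) h
    exacts [h, h, h, h.symm]⟩
  loopless := ⟨by
    rintro (_ | a) h
    exacts [h, F.loopless.irrefl a h]⟩

theorem IsContained.cone_of_induce_neighborSet {F : SimpleGraph α} {G : SimpleGraph β} {u : β}
    (h : F ⊑ G.induce (G.neighborSet u)) : F.cone ⊑ G := by
  obtain ⟨f⟩ := h
  let g : Option α → β := fun x => x.elim u fun a => f a
  have hu (a : α) : G.Adj u (f a) := (f a).2
  refine ⟨⟨⟨g, ?_⟩, ?_⟩⟩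
  · rintro (_ | a) (_ | b) hab
    exacts [hab.elim, hu b, (hu a).symm, f.toHom.map_adj hab]
  · rintro (_ | a) (_ | b) hab
    · rfl
    · exact absurd hab (hu b).ne
    · exact absurd hab.symm (hu a).ne
    · exact congrArg some (f.injective (Subtype.ext hab))

end SimpleGraph

theorem containsSub_iff_isContained {α β : Type} (F : SimpleGraph α) (G : SimpleGraph β) :
    ContainsSub F G ↔ F ⊑ G :=
  ⟨fun ⟨f, hf⟩ => ⟨⟨f, hf⟩⟩, fun ⟨f⟩ => ⟨f.toHom, f.injective⟩⟩

theorem theta133_isContained_cone_pathGraph : theta133 ⊑ (pathGraph 5).cone := by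
  refine ⟨⟨⟨![none, some 2, some 0, some 1, some 4, some 3], ?_⟩, ?_⟩⟩
  · intro a b h
    fin_cases a <;> fin_cases b <;> simp [theta133, cone, pathGraph_adj] at h ⊢
  · intro a b h
    fin_cases a <;> fin_cases b <;> simp_all

theorem induced_neighborhood_P5_free_general {V : Type} (G : SimpleGraph V)
    (hfree : ¬ ContainsSub theta133 G) (ustar : V) :
    ¬ ContainsSub (SimpleGraph.pathGraph 5) (G.induce (G.neighborSet ustar)) := by
  rw [containsSub_iff_isContained] at hfree ⊢
  exact fun hP5 => hfree (theta133_isContained_cone_pathGraph.trans hP5.cone_of_induce_neighborSet)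

/-- if `G` is `θ(1,3,3)`-free, then the subgraph induced on the
neighbourhood of any vertex `u*` contains no path on five vertices. -/
theorem induced_neighborhood_P5_free {V : Type} [Fintype V] (G : SimpleGraph V)
    (hfree : ¬ ContainsSub theta133 G) (ustar : V) :
    ¬ ContainsSub (SimpleGraph.pathGraph 5) (G.induce (G.neighborSet ustar)) :=
  induced_neighborhood_P5_free_general G hfree ustar
end

section
/- Let G be a connected graph of size m with Perron vector X, let u* be a vertex with maximum Perron entry, and set W = V(G) \ N[u*]. Suppose ρ(G) > (1 + √(4m−5))/2 and there exists a vertex v at distance 2 from u* with x_v < (1−β)x_{u*} for some 0 < β < 1. Then e(W) < e(N(u*)) − |N_+(u*)| + 3/2 − β·d_{N(u*)}(v), where N_+(u*) is the set of non-isolated vertices of G[N(u*)] and e(·) counts edges in the induced subgraph. -/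
open Matrix SimpleGraph

/-!
Write `N = N(u*)`, `W = V \ N[u*]` and `d_N(w) = |N(w) ∩ N|`. Counting walks of length two from
`u*` gives `ρ² x_{u*} = ∑_w d_N(w) x_w`; subtracting `ρ x_{u*} = ∑_{w ∈ N} x_w` leaves a sum whose
`w`-th term is at most `x_{u*}` times `d_N(w)`, less one if `w ∈ N₊` and less `β d_N(v)` if `w = v`.
Double counting gives `∑_w d_N(w) = ∑_{w ∈ N} d(w) = m + e(N) - e(W)`, and the hypothesis on `ρ`
says `ρ² - ρ > m - 3/2`.
-/

open Finset

namespace SimpleGraph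

variable {V : Type} [Fintype V] (G : SimpleGraph V) [DecidableRel G.Adj]

theorem adjMat_mulVec_apply (x : V → ℝ) (u : V) :
    (adjMat G *ᵥ x) u = ∑ w ∈ G.neighborFinset u, x w := by
  have hmat : adjMat G = G.adjMatrix ℝ := by
    ext a b
    simp only [adjMat, adjMatrix_apply]
    congr
  rw [hmat, adjMatrix_mulVec_apply]

variable [DecidableEq V]

theorem sum_sum_neighborFinset_eq_sum_card_inter_smul {M : Type*} [AddCommMonoid M]
    (s : Finset V) (f : V → M) :
    ∑ u ∈ s, ∑ w ∈ G.neighborFinset u, f w = ∑ w, #(G.neighborFinset w ∩ s) • f w := by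
  have hfilter : ∀ w, {u ∈ s | G.Adj u w} = G.neighborFinset w ∩ s := fun w => by
    ext u; simp [adj_comm, and_comm]
  calc ∑ u ∈ s, ∑ w ∈ G.neighborFinset u, f w
      = ∑ u ∈ s, ∑ w, if G.Adj u w then f w else 0 := by
        simp only [neighborFinset_eq_filter, sum_filter]
    _ = ∑ w, #(G.neighborFinset w ∩ s) • f w := by
        rw [sum_comm]
        exact sum_congr rfl fun w _ => by rw [← sum_filter, sum_const, hfilter]

theorem sum_card_neighborFinset_inter_eq_sum_degree (s : Finset V) :
    ∑ w, #(G.neighborFinset w ∩ s) = ∑ u ∈ s, G.degree u := by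
  have h := G.sum_sum_neighborFinset_eq_sum_card_inter_smul s (fun _ => 1)
  simp only [sum_const, smul_eq_mul, mul_one, card_neighborFinset_eq_degree] at h
  exact h.symm

theorem two_mul_ncard_edgeSet_induce (s : Finset V) :
    2 * (G.induce (s : Set V)).edgeSet.ncard = ∑ w ∈ s, #(G.neighborFinset w ∩ s) := by
  rw [← coe_edgeFinset, Set.ncard_coe_finset, ← sum_degrees_eq_twice_card_edges,
    ← sum_coe_sort s]
  refine sum_congr rfl fun w _ => ?_
  have h := congrArg card (map_neighborFinset_induce (G := G) (s := (s : Set V)) w)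
  rw [card_map, card_neighborFinset_eq_degree, toFinset_coe] at h
  convert h

theorem sum_degree_neighborFinset_add_ncard_edgeSet_induce_compl (u : V) :
    ∑ w ∈ G.neighborFinset u, G.degree w + (G.induce (insert u (G.neighborSet u))ᶜ).edgeSet.ncard
      = G.edgeSet.ncard + (G.induce (G.neighborSet u)).edgeSet.ncard := by
  set N := G.neighborFinset u
  set W := (insert u N)ᶜ
  have hsplit : ∀ f : V → ℕ, ∑ w, f w = f u + ∑ w ∈ N, f w + ∑ w ∈ W, f w := fun f => by
    rw [← sum_compl_add_sum (insert u N), sum_insert (G.notMem_neighborFinset_self u)]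
    ring
  have hW : ∀ w ∈ W, G.degree w = #(G.neighborFinset w ∩ N) + #(G.neighborFinset w ∩ W) := by
    intro w hw
    have hwu : u ∉ G.neighborFinset w := by
      simp only [W, mem_compl, mem_insert, not_or, N, mem_neighborFinset] at hw
      simpa [adj_comm] using hw.2
    rw [← card_neighborFinset_eq_degree, ← card_inter_add_card_sdiff _ (insert u N),
      inter_insert_of_notMem hwu, sdiff_eq_inter_compl]
  have hedgesN := G.two_mul_ncard_edgeSet_induce N
  have hedgesW := G.two_mul_ncard_edgeSet_induce W
  have hdegN := G.sum_card_neighborFinset_inter_eq_sum_degree N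
  have hedges := G.sum_degrees_eq_twice_card_edges
  rw [hsplit, sum_congr rfl hW, sum_add_distrib] at hedges
  rw [hsplit, inter_self, card_neighborFinset_eq_degree] at hdegN
  rw [coe_compl, coe_insert, coe_neighborFinset] at hedgesW
  rw [coe_neighborFinset] at hedgesN
  rw [← G.coe_edgeFinset, Set.ncard_coe_finset]
  omega

variable {G} {ρ : ℝ} {x : V → ℝ}

theorem sq_mul_eq_sum_card_inter_mul (heig : ∀ u, ∑ w ∈ G.neighborFinset u, x w = ρ * x u)
    (u : V) : ρ ^ 2 * x u = ∑ w, #(G.neighborFinset w ∩ G.neighborFinset u) * x w := by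
  calc ρ ^ 2 * x u = ∑ w' ∈ G.neighborFinset u, ρ * x w' := by rw [← mul_sum, heig]; ring
    _ = _ := by
      simp_rw [← heig]
      rw [G.sum_sum_neighborFinset_eq_sum_card_inter_smul]
      simp only [nsmul_eq_mul]

theorem card_inter_mul_sub_le {u v : V} (hpos : ∀ w, 0 < x w) (hmax : ∀ w, x w ≤ x u)
    (huv : ¬ G.Adj u v) {β : ℝ} (hxv : x v ≤ (1 - β) * x u) (w : V) :
    #(G.neighborFinset w ∩ G.neighborFinset u) * x w - (if w ∈ G.neighborFinset u then x w else 0)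
      ≤ (#(G.neighborFinset w ∩ G.neighborFinset u)
          - if w ∈ {w ∈ G.neighborFinset u | (G.neighborFinset w ∩ G.neighborFinset u).Nonempty}
            then 1 else 0) * x u
        - if w = v then β * #(G.neighborFinset v ∩ G.neighborFinset u) * x u else 0 := by
  set N := G.neighborFinset u
  have hvN : v ∉ N := by simpa [N] using huv
  have hd : (0 : ℝ) ≤ #(G.neighborFinset w ∩ N) := Nat.cast_nonneg _
  by_cases hwv : w = v
  · subst hwv
    rw [if_neg hvN, if_neg fun h => hvN (mem_filter.1 h).1, if_pos rfl]
    nlinarith [mul_le_mul_of_nonneg_left hxv hd]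
  rw [if_neg hwv, sub_zero]
  by_cases hwN : w ∈ N
  · rw [if_pos hwN]
    split_ifs with hwP
    · have hd1 : (1 : ℝ) ≤ #(G.neighborFinset w ∩ N) :=
        Nat.one_le_cast.2 (mem_filter.1 hwP).2.card_pos
      nlinarith [mul_le_mul_of_nonneg_left (hmax w) (sub_nonneg.2 hd1)]
    · have hd0 : G.neighborFinset w ∩ N = ∅ := by simp_all [not_nonempty_iff_eq_empty]
      simp only [hd0, card_empty, CharP.cast_eq_zero]
      linarith [hpos w, hpos u]
  · rw [if_neg hwN, if_neg fun h => hwN (mem_filter.1 h).1]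
    linarith [mul_le_mul_of_nonneg_left (hmax w) hd]

theorem sq_sub_le_sum_degree_sub (heig : ∀ u, ∑ w ∈ G.neighborFinset u, x w = ρ * x u)
    (hpos : ∀ w, 0 < x w) {u v : V} (hmax : ∀ w, x w ≤ x u) (huv : ¬ G.Adj u v) {β : ℝ}
    (hxv : x v ≤ (1 - β) * x u) :
    ρ ^ 2 - ρ ≤ ((∑ w ∈ G.neighborFinset u, G.degree w : ℕ) : ℝ)
      - #{w ∈ G.neighborFinset u | (G.neighborFinset w ∩ G.neighborFinset u).Nonempty}
      - β * #(G.neighborFinset v ∩ G.neighborFinset u) := by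
  refine le_of_mul_le_mul_right ?_ (hpos u)
  calc (ρ ^ 2 - ρ) * x u
      = ∑ w, (#(G.neighborFinset w ∩ G.neighborFinset u) * x w
          - if w ∈ G.neighborFinset u then x w else 0) := by
        rw [sum_sub_distrib, ← sq_mul_eq_sum_card_inter_mul heig, sum_ite_mem, univ_inter, heig]
        ring
    _ ≤ _ := sum_le_sum fun w _ => card_inter_mul_sub_le hpos hmax huv hxv w
    _ = _ := by
        rw [sum_sub_distrib, sum_ite_eq', if_pos (mem_univ v), ← sum_mul, sum_sub_distrib,
          sum_boole, filter_mem_eq_inter, univ_inter,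
          ← G.sum_card_neighborFinset_inter_eq_sum_degree]
        push_cast
        ring

end SimpleGraph

theorem sub_three_halves_lt_sq_sub {t ρ : ℝ} (h : (1 + √(4 * t - 5)) / 2 < ρ) :
    t - 3 / 2 < ρ ^ 2 - ρ := by
  have := Real.lt_sq_of_sqrt_lt (show √(4 * t - 5) < 2 * ρ - 1 by linarith)
  nlinarith

open Classical in
theorem edge_bound_outside_neighborhood_general {V : Type} [Fintype V] (G : SimpleGraph V)
    (m : ℕ) (hm : G.edgeSet.ncard = m)
    (ρ : ℝ) (x : V → ℝ) (hpos : ∀ v, 0 < x v)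
    (heig : adjMat G *ᵥ x = ρ • x)
    (ustar : V) (hmax : ∀ u, x u ≤ x ustar)
    (hρ : (1 + Real.sqrt (4 * m - 5)) / 2 < ρ)
    (β : ℝ)
    (v : V) (hdist : G.dist ustar v = 2) (hxv : x v < (1 - β) * x ustar) :
    (((G.induce {w : V | w ∉ G.neighborSet ustar ∧ w ≠ ustar}).edgeSet.ncard : ℝ)) <
      ((G.induce (G.neighborSet ustar)).edgeSet.ncard : ℝ)
      - ({u : V | u ∈ G.neighborSet ustar ∧ ∃ w ∈ G.neighborSet ustar, G.Adj u w}.ncard : ℝ)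
      + 3 / 2
      - β * ((G.neighborSet v ∩ G.neighborSet ustar).ncard : ℝ) := by
  have heig' (u : V) : ∑ w ∈ G.neighborFinset u, x w = ρ * x u := by
    simpa [adjMat_mulVec_apply] using congrFun heig u
  have huv : ¬ G.Adj ustar v := fun h => by
    rw [dist_eq_one_iff_adj.2 h] at hdist
    norm_num at hdist
  have hspectral := sq_sub_le_sum_degree_sub heig' hpos hmax huv hxv.le
  have hcount := G.sum_degree_neighborFinset_add_ncard_edgeSet_induce_compl ustar
  have hW : {w | w ∉ G.neighborSet ustar ∧ w ≠ ustar} = (insert ustar (G.neighborSet ustar))ᶜ := by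
    ext w; simp [and_comm]
  have hNplus : {u | u ∈ G.neighborSet ustar ∧ ∃ w ∈ G.neighborSet ustar, G.Adj u w}
      = (({u ∈ G.neighborFinset ustar | (G.neighborFinset u ∩ G.neighborFinset ustar).Nonempty} :
          Finset V) : Set V) := by
    ext u; simp [Finset.Nonempty, and_comm]
  have hdv : G.neighborSet v ∩ G.neighborSet ustar
      = ((G.neighborFinset v ∩ G.neighborFinset ustar : Finset V) : Set V) := by
    simp
  rw [hW, hNplus, hdv, Set.ncard_coe_finset, Set.ncard_coe_finset]
  have hcountℝ : ((∑ w ∈ G.neighborFinset ustar, G.degree w : ℕ) : ℝ)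
      + (G.induce (insert ustar (G.neighborSet ustar))ᶜ).edgeSet.ncard
      = m + (G.induce (G.neighborSet ustar)).edgeSet.ncard := by
    exact_mod_cast hm ▸ hcount
  linarith [sub_three_halves_lt_sq_sub hρ]

open Classical in
/-- if `ρ(G) > (1 + √(4m-5))/2` and some vertex `v` at distance two from
`u*` has Perron entry less than `(1 - β) x_{u*}` with `0 < β < 1`, then
`e(W) < e(N(u*)) - |N₊(u*)| + 3/2 - β d_{N(u*)}(v)`, where `W = V(G) \ N[u*]`. -/
theorem edge_bound_outside_neighborhood {V : Type} [Fintype V] (G : SimpleGraph V)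
    (hconn : G.Connected) (m : ℕ) (hm : G.edgeSet.ncard = m)
    (ρ : ℝ) (x : V → ℝ) (hspec : IsSpecRad G ρ) (hpos : ∀ v, 0 < x v)
    (heig : adjMat G *ᵥ x = ρ • x)
    (ustar : V) (hmax : ∀ u, x u ≤ x ustar)
    (hρ : (1 + Real.sqrt (4 * m - 5)) / 2 < ρ)
    (β : ℝ) (hβ0 : 0 < β) (hβ1 : β < 1)
    (v : V) (hdist : G.dist ustar v = 2) (hxv : x v < (1 - β) * x ustar) :
    (((G.induce {w : V | w ∉ G.neighborSet ustar ∧ w ≠ ustar}).edgeSet.ncard : ℝ)) <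
      ((G.induce (G.neighborSet ustar)).edgeSet.ncard : ℝ)
      - ({u : V | u ∈ G.neighborSet ustar ∧ ∃ w ∈ G.neighborSet ustar, G.Adj u w}.ncard : ℝ)
      + 3 / 2
      - β * ((G.neighborSet v ∩ G.neighborSet ustar).ncard : ℝ) :=
  edge_bound_outside_neighborhood_general G m hm ρ x hpos heig ustar hmax hρ β v hdist hxv
end
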